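/- arXiv:0907.3268 — 10 statements merged into one kernel-verified Lean document; each statement's English description precedes it below -/
import Mathlib

section
/- A BL-algebra A is locally finite (i.e., every element x ≠ 1 has finite order) if and only if A is simple (i.e., A has exactly two filters, {1} and A). Moreover, in this case A is linearly ordered. -/
/-- A BL-algebra: a bounded lattice with a commutative monoid operation `mul` (⊙, with unit ⊤)
and a residuum `imp` (→) satisfying residuation, divisibility and prelinearity.
The constants 0 and 1 of the BL-algebra are `⊥` and `⊤`. -/
structure BLAlgebra (α : Type*) [Lattice α] [BoundedOrder α] where
  mul : α → α → α
  imp : α → α → α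
  mul_comm : ∀ a b : α, mul a b = mul b a
  mul_assoc : ∀ a b c : α, mul (mul a b) c = mul a (mul b c)
  mul_top : ∀ a : α, mul a ⊤ = a
  le_imp_iff : ∀ a b c : α, c ≤ imp a b ↔ mul a c ≤ b
  inf_eq_mul_imp : ∀ a b : α, a ⊓ b = mul a (imp a b)
  sup_imp_eq_top : ∀ a b : α, imp a b ⊔ imp b a = ⊤

namespace BLAlgebra

variable {α : Type*} [Lattice α] [BoundedOrder α]

/-- Negation `x⁻ := x → 0`. -/
def neg (A : BLAlgebra α) (x : α) : α := A.imp x ⊥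

/-- Powers: `x⁰ = 1`, `xⁿ⁺¹ = xⁿ ⊙ x`. -/
def pow (A : BLAlgebra α) (x : α) : ℕ → α
  | 0 => ⊤
  | n + 1 => A.mul (A.pow x n) x

/-- A state-operator on a BL-algebra. -/
def IsStateOperator (A : BLAlgebra α) (σ : α → α) : Prop :=
  σ ⊥ = ⊥ ∧
  (∀ x y : α, σ (A.imp x y) = A.imp (σ x) (σ (x ⊓ y))) ∧
  (∀ x y : α, σ (A.mul x y) = A.mul (σ x) (σ (A.imp x (A.mul x y)))) ∧
  (∀ x y : α, σ (A.mul (σ x) (σ y)) = A.mul (σ x) (σ y)) ∧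
  (∀ x y : α, σ (A.imp (σ x) (σ y)) = A.imp (σ x) (σ y))

/-- A strong state-operator: axioms (1), (2), (3′), (4), (5). -/
def IsStrongStateOperator (A : BLAlgebra α) (σ : α → α) : Prop :=
  σ ⊥ = ⊥ ∧
  (∀ x y : α, σ (A.imp x y) = A.imp (σ x) (σ (x ⊓ y))) ∧
  (∀ x y : α, σ (A.mul x y) = A.mul (σ x) (σ (A.neg x ⊔ y))) ∧
  (∀ x y : α, σ (A.mul (σ x) (σ y)) = A.mul (σ x) (σ y)) ∧
  (∀ x y : α, σ (A.imp (σ x) (σ y)) = A.imp (σ x) (σ y))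

/-- A state-morphism-operator: axioms (1), (2), (4), (5), (6). -/
def IsStateMorphismOperator (A : BLAlgebra α) (σ : α → α) : Prop :=
  σ ⊥ = ⊥ ∧
  (∀ x y : α, σ (A.imp x y) = A.imp (σ x) (σ (x ⊓ y))) ∧
  (∀ x y : α, σ (A.mul (σ x) (σ y)) = A.mul (σ x) (σ y)) ∧
  (∀ x y : α, σ (A.imp (σ x) (σ y)) = A.imp (σ x) (σ y)) ∧
  (∀ x y : α, σ (A.mul x y) = A.mul (σ x) (σ y))

/-- A filter of a BL-algebra: nonempty, closed under ⊙, upward closed. -/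
def IsFilter (A : BLAlgebra α) (F : Set α) : Prop :=
  F.Nonempty ∧ (∀ x ∈ F, ∀ y ∈ F, A.mul x y ∈ F) ∧ ∀ x ∈ F, ∀ y : α, x ≤ y → y ∈ F

/-- A filter of the subalgebra carried by the subset `S`. -/
def IsFilterOn (A : BLAlgebra α) (S F : Set α) : Prop :=
  F ⊆ S ∧ F.Nonempty ∧ (∀ x ∈ F, ∀ y ∈ F, A.mul x y ∈ F) ∧
    ∀ x ∈ F, ∀ y ∈ S, x ≤ y → y ∈ F

/-- A state-filter of `(A, σ)`: a filter closed under `σ`. -/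
def IsStateFilter (A : BLAlgebra α) (σ : α → α) (F : Set α) : Prop :=
  A.IsFilter F ∧ ∀ x ∈ F, σ x ∈ F

/-- A maximal filter: a proper filter not properly contained in any proper filter. -/
def IsMaximalFilter (A : BLAlgebra α) (F : Set α) : Prop :=
  A.IsFilter F ∧ F ≠ Set.univ ∧
    ∀ G : Set α, A.IsFilter G → G ≠ Set.univ → F ⊆ G → F = G

/-- A maximal filter of the subalgebra carried by `S`. -/
def IsMaximalFilterOn (A : BLAlgebra α) (S F : Set α) : Prop :=
  A.IsFilterOn S F ∧ F ≠ S ∧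
    ∀ G : Set α, A.IsFilterOn S G → G ≠ S → F ⊆ G → F = G

/-- A maximal state-filter of `(A, σ)`. -/
def IsMaximalStateFilter (A : BLAlgebra α) (σ : α → α) (F : Set α) : Prop :=
  A.IsStateFilter σ F ∧ F ≠ Set.univ ∧
    ∀ G : Set α, A.IsStateFilter σ G → G ≠ Set.univ → F ⊆ G → F = G

/-- The radical: the intersection of all maximal filters. -/
def Rad (A : BLAlgebra α) : Set α :=
  {x : α | ∀ F : Set α, A.IsMaximalFilter F → x ∈ F}

/-- The radical of the subalgebra carried by `S`. -/
def RadOn (A : BLAlgebra α) (S : Set α) : Set α :=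
  {x : α | x ∈ S ∧ ∀ F : Set α, A.IsMaximalFilterOn S F → x ∈ F}

/-- The kernel of a state-operator. -/
def Ker (_A : BLAlgebra α) (σ : α → α) : Set α := {x : α | σ x = ⊤}

end BLAlgebra

section MyAux

variable {α : Type*} [Lattice α] [BoundedOrder α] (A : BLAlgebra α)

private lemma my_mul_le_mul_right {b c : α} (h : b ≤ c) (a : α) :
    A.mul a b ≤ A.mul a c :=
  (A.le_imp_iff a (A.mul a c) b).mp
    (le_trans h ((A.le_imp_iff a (A.mul a c) c).mpr le_rfl))

private lemma my_mul_le_left (a b : α) : A.mul a b ≤ a := by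
  have := my_mul_le_mul_right A (le_top : b ≤ ⊤) a
  rwa [A.mul_top] at this

private lemma my_mul_le_right (a b : α) : A.mul a b ≤ b := by
  rw [A.mul_comm]; exact my_mul_le_left A b a

private lemma my_imp_eq_top_iff (a b : α) : A.imp a b = ⊤ ↔ a ≤ b := by
  constructor
  · intro h
    have : (⊤ : α) ≤ A.imp a b := h.ge
    have := (A.le_imp_iff a b ⊤).mp this
    rwa [A.mul_top] at this
  · intro h
    refine top_le_iff.mp ?_
    rw [A.le_imp_iff, A.mul_top]; exact h

private lemma my_mul_sup (a b c : α) :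
    A.mul a (b ⊔ c) = A.mul a b ⊔ A.mul a c := by
  apply le_antisymm
  · rw [← A.le_imp_iff]
    exact sup_le ((A.le_imp_iff _ _ _).mpr le_sup_left)
      ((A.le_imp_iff _ _ _).mpr le_sup_right)
  · exact sup_le (my_mul_le_mul_right A le_sup_left a)
      (my_mul_le_mul_right A le_sup_right a)

private lemma my_pow_sup {a b : α} (h : a ⊔ b = ⊤) :
    ∀ n : ℕ, A.pow a n ⊔ b = ⊤ := by
  intro n
  induction n with
  | zero => simp [BLAlgebra.pow]
  | succ n ih =>
    have htop : (⊤ : α) = A.mul (A.pow a n ⊔ b) (a ⊔ b) := by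
      rw [ih, h, A.mul_top]
    have hle : A.mul (A.pow a n ⊔ b) (a ⊔ b) ≤ A.pow a (n + 1) ⊔ b := by
      rw [my_mul_sup]
      refine sup_le ?_ (le_trans (my_mul_le_right A _ _) le_sup_right)
      rw [A.mul_comm, my_mul_sup]
      refine sup_le ?_ (le_trans (my_mul_le_right A _ _) le_sup_right)
      rw [A.mul_comm]
      exact le_sup_left
    exact top_le_iff.mp (htop ▸ hle)

private lemma my_pow_mem {F : Set α} (hF : A.IsFilter F) {x : α} (hx : x ∈ F) :
    ∀ n : ℕ, A.pow x n ∈ F := by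
  intro n
  induction n with
  | zero => exact hF.2.2 x hx ⊤ le_top
  | succ n ih => exact hF.2.1 _ ih _ hx

private lemma my_mul_le_mul {a b c d : α} (hac : a ≤ c) (hbd : b ≤ d) :
    A.mul a b ≤ A.mul c d := by
  calc A.mul a b ≤ A.mul a d := my_mul_le_mul_right A hbd a
    _ = A.mul d a := A.mul_comm a d
    _ ≤ A.mul d c := my_mul_le_mul_right A hac d
    _ = A.mul c d := A.mul_comm d c

private lemma my_pow_add (x : α) (n m : ℕ) :
    A.pow x (n + m) = A.mul (A.pow x n) (A.pow x m) := by
  induction m with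
  | zero => simp [BLAlgebra.pow, A.mul_top]
  | succ m ih =>
    show A.mul (A.pow x (n + m)) x = A.mul (A.pow x n) (A.mul (A.pow x m) x)
    rw [ih, A.mul_assoc]

end MyAux

/-- A BL-algebra is locally finite iff it is simple
(its only filters are `{⊤}` and the whole algebra); in this case it is linearly ordered. -/
theorem locallyFinite_iff_simple {α : Type*} [Lattice α] [BoundedOrder α]
    (A : BLAlgebra α) :
    ((∀ x : α, x ≠ ⊤ → ∃ n : ℕ, 1 ≤ n ∧ A.pow x n = ⊥) ↔
      {F : Set α | A.IsFilter F} = {{⊤}, Set.univ}) ∧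
    ((∀ x : α, x ≠ ⊤ → ∃ n : ℕ, 1 ≤ n ∧ A.pow x n = ⊥) →
      ∀ x y : α, x ≤ y ∨ y ≤ x) := by
  have linord : (∀ x : α, x ≠ ⊤ → ∃ n : ℕ, 1 ≤ n ∧ A.pow x n = ⊥) →
      ∀ x y : α, x ≤ y ∨ y ≤ x := by
    intro hlf x y
    by_cases hxy : x ≤ y
    · exact Or.inl hxy
    · right
      have hne : A.imp x y ≠ ⊤ := fun h => hxy ((my_imp_eq_top_iff A x y).mp h)
      obtain ⟨n, _, hn⟩ := hlf _ hne
      have h2 := my_pow_sup A (A.sup_imp_eq_top x y) n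
      rw [hn, bot_sup_eq] at h2
      exact (my_imp_eq_top_iff A y x).mp h2
  refine ⟨⟨?_, ?_⟩, linord⟩
  · intro hlf
    apply Set.eq_of_subset_of_subset
    · intro F hF
      simp only [Set.mem_setOf_eq] at hF
      simp only [Set.mem_insert_iff, Set.mem_singleton_iff]
      by_cases hFt : F = {⊤}
      · exact Or.inl hFt
      · right
        have htopF : (⊤ : α) ∈ F := by
          obtain ⟨w, hw⟩ := hF.1
          exact hF.2.2 w hw ⊤ le_top
        have hex : ∃ x ∈ F, x ≠ ⊤ := by
          by_contra h
          push_neg at h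
          apply hFt
          ext z
          simp only [Set.mem_singleton_iff]
          exact ⟨fun hz => h z hz, fun hz => hz ▸ htopF⟩
        obtain ⟨x, hxF, hx⟩ := hex
        obtain ⟨n, _, hn⟩ := hlf x hx
        have hbot : (⊥ : α) ∈ F := hn ▸ my_pow_mem A hF hxF n
        exact Set.eq_univ_of_forall fun z => hF.2.2 ⊥ hbot z bot_le
    · intro F hF
      simp only [Set.mem_insert_iff, Set.mem_singleton_iff] at hF
      simp only [Set.mem_setOf_eq]
      rcases hF with h | h <;> subst h
      · refine ⟨⟨⊤, rfl⟩, ?_, ?_⟩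
        · intro a ha b hb
          rw [Set.mem_singleton_iff] at ha hb ⊢
          rw [ha, hb, A.mul_top]
        · intro a ha b hab
          rw [Set.mem_singleton_iff] at ha ⊢
          exact le_antisymm le_top (ha ▸ hab)
      · exact ⟨⟨⊤, trivial⟩, fun _ _ _ _ => trivial, fun _ _ _ _ => trivial⟩
  · intro hsimple x hx
    set F : Set α := {y : α | ∃ n : ℕ, A.pow x n ≤ y} with hFdef
    have hF : A.IsFilter F := by
      refine ⟨⟨x, 1, ?_⟩, ?_, ?_⟩
      · simp [BLAlgebra.pow, A.mul_comm, A.mul_top]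
      · rintro a ⟨n, hn⟩ b ⟨m, hm⟩
        exact ⟨n + m, (my_pow_add A x n m) ▸ my_mul_le_mul A hn hm⟩
      · rintro a ⟨n, hn⟩ b hab
        exact ⟨n, le_trans hn hab⟩
    have hmem : F ∈ ({{⊤}, Set.univ} : Set (Set α)) := hsimple ▸ hF
    have hxF : x ∈ F := ⟨1, by simp [BLAlgebra.pow, A.mul_comm, A.mul_top]⟩
    rcases hmem with h | h
    · exact absurd (h ▸ hxF : x ∈ ({⊤} : Set α)) (by simpa using hx)
    · have hbot : (⊥ : α) ∈ F := by
        rw [Set.mem_singleton_iff] at h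
        rw [h]; trivial
      obtain ⟨n, hn⟩ := hbot
      refine ⟨n + 1, Nat.le_add_left 1 n, le_antisymm ?_ bot_le⟩
      calc A.pow x (n + 1) = A.mul (A.pow x n) x := rfl
        _ ≤ A.pow x n := my_mul_le_left A _ _
        _ ≤ ⊥ := hn
end

section
/- Let σ be a state-operator on a BL-algebra A. Then (j) σ(σ(x)) = σ(x) for all x ∈ A; (k) the image σ(A) is a BL-subalgebra of A (closed under ∧, ∨, ⊙, → and containing 0, 1); and (l) σ(A) = {x ∈ A : σ(x) = x}. -/
/-- for a state-operator σ: (j) σ∘σ = σ; (k) σ(A) is a BL-subalgebra of A;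
(l) σ(A) = {x : σ(x) = x}. -/
theorem stateOperator_image_subalgebra {α : Type*} [Lattice α] [BoundedOrder α]
    (A : BLAlgebra α) (σ : α → α) (hσ : A.IsStateOperator σ) :
    (∀ x : α, σ (σ x) = σ x) ∧
    ((⊥ : α) ∈ Set.range σ ∧ (⊤ : α) ∈ Set.range σ ∧
      ∀ x ∈ Set.range σ, ∀ y ∈ Set.range σ,
        x ⊓ y ∈ Set.range σ ∧ x ⊔ y ∈ Set.range σ ∧
        A.mul x y ∈ Set.range σ ∧ A.imp x y ∈ Set.range σ) ∧
    Set.range σ = {x : α | σ x = x} := by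
  obtain ⟨h1, h2, h3, h4, h5⟩ := hσ
  -- basic BL facts
  have le_iff : ∀ a b : α, a ≤ b ↔ A.imp a b = ⊤ := by
    intro a b
    constructor
    · intro h
      refine le_antisymm le_top ?_
      rw [A.le_imp_iff, A.mul_top]; exact h
    · intro h
      have := (A.le_imp_iff a b ⊤).mp (h ▸ le_refl _)
      rwa [A.mul_top] at this
  have imp_self : ∀ a : α, A.imp a a = ⊤ := fun a => (le_iff a a).mp le_rfl
  have mul_mono : ∀ a b c : α, b ≤ c → A.mul a b ≤ A.mul a c := by
    intro a b c h
    have hc : c ≤ A.imp a (A.mul a c) := (A.le_imp_iff _ _ _).mpr le_rfl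
    exact (A.le_imp_iff _ _ _).mp (h.trans hc)
  have mul_le_right : ∀ a b : α, A.mul a b ≤ b := by
    intro a b
    have h := mul_mono b a ⊤ le_top
    rw [A.mul_top] at h
    rw [A.mul_comm]; exact h
  have le_imp : ∀ a b : α, b ≤ A.imp a b := fun a b =>
    (A.le_imp_iff _ _ _).mpr (mul_le_right a b)
  -- the BL sup identity
  have sup_eq : ∀ a b : α, a ⊔ b = A.imp (A.imp a b) b ⊓ A.imp (A.imp b a) a := by
    intro a b
    apply le_antisymm
    · apply sup_le
      · apply le_inf
        · refine (A.le_imp_iff _ _ _).mpr ?_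
          rw [A.mul_comm, ← A.inf_eq_mul_imp]; exact inf_le_right
        · exact le_imp _ _
      · apply le_inf
        · exact le_imp _ _
        · refine (A.le_imp_iff _ _ _).mpr ?_
          rw [A.mul_comm, ← A.inf_eq_mul_imp]; exact inf_le_right
    · set c := A.imp (A.imp a b) b ⊓ A.imp (A.imp b a) a with hc
      have hab : A.imp a b ≤ A.imp c (a ⊔ b) := by
        refine (A.le_imp_iff _ _ _).mpr ?_
        have h1' : A.mul (A.imp a b) c ≤ b := by
          refine (A.le_imp_iff _ _ _).mp ?_
          exact inf_le_left
        rw [A.mul_comm] at h1'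
        exact le_trans h1' le_sup_right
      have hba : A.imp b a ≤ A.imp c (a ⊔ b) := by
        refine (A.le_imp_iff _ _ _).mpr ?_
        have h1' : A.mul (A.imp b a) c ≤ a := by
          refine (A.le_imp_iff _ _ _).mp ?_
          exact inf_le_right
        rw [A.mul_comm] at h1'
        exact le_trans h1' le_sup_left
      have htop : A.imp c (a ⊔ b) = ⊤ := by
        refine le_antisymm le_top ?_
        rw [← A.sup_imp_eq_top a b]
        exact sup_le hab hba
      exact (le_iff c (a ⊔ b)).mpr htop
  -- σ ⊤ = ⊤
  have sigma_top : σ ⊤ = ⊤ := by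
    have h := h2 ⊥ ⊥
    rw [imp_self, h1, inf_idem, h1] at h
    rw [h, imp_self]
  -- (j) idempotence
  have hj : ∀ x : α, σ (σ x) = σ x := by
    intro x
    have h := h4 x ⊤
    rwa [sigma_top, A.mul_top] at h
  -- fixed-point lemmas
  have fix_mul : ∀ x y : α, σ (A.mul (σ x) (σ y)) = A.mul (σ x) (σ y) := h4
  have fix_imp : ∀ x y : α, σ (A.imp (σ x) (σ y)) = A.imp (σ x) (σ y) := h5
  have fix_inf : ∀ x y : α, σ (σ x ⊓ σ y) = σ x ⊓ σ y := by
    intro x y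
    have he : σ x ⊓ σ y = A.mul (σ x) (σ (A.imp (σ x) (σ y))) := by
      rw [fix_imp, A.inf_eq_mul_imp]
    rw [he, ← hj x, h4, hj]
  have fix_sup : ∀ x y : α, σ (σ x ⊔ σ y) = σ x ⊔ σ y := by
    intro x y
    have he : σ x ⊔ σ y =
        σ (A.imp (σ (A.imp (σ x) (σ y))) (σ y)) ⊓
        σ (A.imp (σ (A.imp (σ y) (σ x))) (σ x)) := by
      rw [h5, h5, fix_imp, fix_imp, sup_eq]
    rw [he, fix_inf]
  -- (l) range = fixed points
  have hl : Set.range σ = {x : α | σ x = x} := by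
    ext x
    constructor
    · rintro ⟨a, rfl⟩; exact hj a
    · intro hx; exact ⟨x, hx⟩
  refine ⟨hj, ⟨⟨⊥, h1⟩, ⟨⊤, sigma_top⟩, ?_⟩, hl⟩
  rintro x ⟨a, rfl⟩ y ⟨b, rfl⟩
  exact ⟨⟨σ a ⊓ σ b, fix_inf a b⟩, ⟨σ a ⊔ σ b, fix_sup a b⟩,
    ⟨A.mul (σ a) (σ b), fix_mul a b⟩, ⟨A.imp (σ a) (σ b), fix_imp a b⟩⟩
end

section
/- Every strong state BL-algebra is a state BL-algebra; that is, if σ : A → A satisfies axioms (1), (2), (4), (5) together with (3′) σ(x ⊙ y) = σ(x) ⊙ σ(x⁻ ∨ y) for all x, y, then σ also satisfies (3) σ(x ⊙ y) = σ(x) ⊙ σ(x → x ⊙ y) for all x, y, and hence is a state-operator. -/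
/-- every strong state-operator is a state-operator. -/
theorem strongStateOperator_isStateOperator {α : Type*} [Lattice α] [BoundedOrder α]
    (A : BLAlgebra α) (σ : α → α) (hσ : A.IsStrongStateOperator σ) :
    A.IsStateOperator σ := by
  obtain ⟨h1, h2, h3', h4, h5⟩ := hσ
  refine ⟨h1, h2, ?_, h4, h5⟩
  intro x y
  -- key facts
  have hxy_le : A.mul x y ≤ x := by
    rw [← A.le_imp_iff]
    exact le_trans le_top (by rw [A.le_imp_iff, A.mul_top])
  have hmulbot : A.mul x (A.imp x ⊥) = ⊥ := by
    have := A.inf_eq_mul_imp x ⊥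
    simp at this; exact this.symm
  have hneg_le : A.neg x ≤ A.imp x (A.mul x y) := by
    rw [A.le_imp_iff]
    unfold BLAlgebra.neg
    rw [hmulbot]; exact bot_le
  have hmul_eq : A.mul x (A.imp x (A.mul x y)) = A.mul x y := by
    rw [← A.inf_eq_mul_imp]
    exact inf_eq_right.mpr hxy_le
  calc σ (A.mul x y) = σ (A.mul x (A.imp x (A.mul x y))) := by rw [hmul_eq]
    _ = A.mul (σ x) (σ (A.neg x ⊔ A.imp x (A.mul x y))) := h3' _ _
    _ = A.mul (σ x) (σ (A.imp x (A.mul x y))) := by rw [sup_eq_right.mpr hneg_le]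
end

section
/- Let σ be a state-operator on a BL-algebra A. Then σ(x → y) = σ(x) → σ(y) holds for all x, y ∈ A if and only if σ(x ∨ y) = σ(x) ∨ σ(y) holds for all x, y ∈ A. -/
section Aux

namespace BLAlgebra

variable {α : Type*} [Lattice α] [BoundedOrder α] (A : BLAlgebra α)

lemma mul_mono_right (a : α) {b c : α} (h : b ≤ c) : A.mul a b ≤ A.mul a c := by
  have h1 : c ≤ A.imp a (A.mul a c) := (A.le_imp_iff a (A.mul a c) c).mpr le_rfl
  exact (A.le_imp_iff _ _ _).mp (h.trans h1)

lemma mul_mono {a b c d : α} (h1 : a ≤ b) (h2 : c ≤ d) : A.mul a c ≤ A.mul b d :=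
  calc A.mul a c ≤ A.mul a d := A.mul_mono_right a h2
    _ = A.mul d a := A.mul_comm a d
    _ ≤ A.mul d b := A.mul_mono_right d h1
    _ = A.mul b d := A.mul_comm d b

lemma mul_le_left (a b : α) : A.mul a b ≤ a := by
  have := A.mul_mono_right a (le_top (a := b))
  rwa [A.mul_top] at this

lemma mul_le_right (a b : α) : A.mul a b ≤ b := by
  rw [A.mul_comm]; exact A.mul_le_left b a

lemma imp_self (a : α) : A.imp a a = ⊤ := by
  refine le_antisymm le_top ((A.le_imp_iff _ _ _).mpr ?_)
  rw [A.mul_top]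

lemma mul_imp_le (a b : α) : A.mul a (A.imp a b) ≤ b := by
  rw [← A.inf_eq_mul_imp]; exact inf_le_right

lemma imp_mono_right (a : α) {b c : α} (h : b ≤ c) : A.imp a b ≤ A.imp a c :=
  (A.le_imp_iff _ _ _).mpr ((A.mul_imp_le a b).trans h)

lemma imp_inf (x y : α) : A.imp x (x ⊓ y) = A.imp x y := by
  refine le_antisymm (A.imp_mono_right x inf_le_right) ((A.le_imp_iff _ _ _).mpr ?_)
  rw [← A.inf_eq_mul_imp]

lemma mul_sup (a b c : α) : A.mul a (b ⊔ c) = A.mul a b ⊔ A.mul a c := by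
  refine le_antisymm ((A.le_imp_iff _ _ _).mp (sup_le ?_ ?_)) (sup_le
    (A.mul_mono_right a le_sup_left) (A.mul_mono_right a le_sup_right))
  · exact (A.le_imp_iff _ _ _).mpr le_sup_left
  · exact (A.le_imp_iff _ _ _).mpr le_sup_right

lemma sup_eq_inf_imp (x y : α) :
    x ⊔ y = A.imp (A.imp x y) y ⊓ A.imp (A.imp y x) x := by
  refine le_antisymm (sup_le (le_inf ?_ ?_) (le_inf ?_ ?_)) ?_
  · refine (A.le_imp_iff _ _ _).mpr ?_
    rw [A.mul_comm, ← A.inf_eq_mul_imp]; exact inf_le_right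
  · exact (A.le_imp_iff _ _ _).mpr (A.mul_le_right _ _)
  · exact (A.le_imp_iff _ _ _).mpr (A.mul_le_right _ _)
  · refine (A.le_imp_iff _ _ _).mpr ?_
    rw [A.mul_comm, ← A.inf_eq_mul_imp]; exact inf_le_right
  · set m := A.imp (A.imp x y) y ⊓ A.imp (A.imp y x) x with hm
    have h1 : m = A.mul m (A.imp x y) ⊔ A.mul m (A.imp y x) := by
      rw [← A.mul_sup, A.sup_imp_eq_top, A.mul_top]
    rw [h1]
    refine sup_le (le_trans ?_ (le_sup_right : y ≤ x ⊔ y))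
      (le_trans ?_ (le_sup_left : x ≤ x ⊔ y))
    · calc A.mul m (A.imp x y) ≤ A.mul (A.imp (A.imp x y) y) (A.imp x y) :=
            A.mul_mono inf_le_left le_rfl
        _ = A.mul (A.imp x y) (A.imp (A.imp x y) y) := A.mul_comm _ _
        _ ≤ y := A.mul_imp_le _ _
    · calc A.mul m (A.imp y x) ≤ A.mul (A.imp (A.imp y x) x) (A.imp y x) :=
            A.mul_mono inf_le_right le_rfl
        _ = A.mul (A.imp y x) (A.imp (A.imp y x) x) := A.mul_comm _ _
        _ ≤ x := A.mul_imp_le _ _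

variable {σ : α → α}

lemma state_top (hσ : A.IsStateOperator σ) : σ ⊤ = ⊤ := by
  have h := hσ.2.1 ⊤ ⊤
  rw [A.imp_self, inf_idem, A.imp_self] at h
  exact h

lemma state_inf (hσ : A.IsStateOperator σ) (x y : α) :
    σ (x ⊓ y) = A.mul (σ x) (σ (A.imp x y)) := by
  calc σ (x ⊓ y) = σ (A.mul x (A.imp x y)) := by rw [← A.inf_eq_mul_imp]
    _ = A.mul (σ x) (σ (A.imp x (A.mul x (A.imp x y)))) := hσ.2.2.1 x (A.imp x y)
    _ = A.mul (σ x) (σ (A.imp x y)) := by rw [← A.inf_eq_mul_imp, A.imp_inf]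

lemma state_mono (hσ : A.IsStateOperator σ) {x y : α} (h : x ≤ y) : σ x ≤ σ y := by
  have h1 := A.state_inf hσ y x
  rw [inf_eq_right.mpr h] at h1
  rw [h1]; exact A.mul_le_left _ _

end BLAlgebra

end Aux

/-- a state-operator preserves → (for all pairs) iff it preserves ∨ (for all pairs). -/
theorem stateOperator_imp_iff_sup {α : Type*} [Lattice α] [BoundedOrder α]
    (A : BLAlgebra α) (σ : α → α) (hσ : A.IsStateOperator σ) :
    (∀ x y : α, σ (A.imp x y) = A.imp (σ x) (σ y)) ↔
    (∀ x y : α, σ (x ⊔ y) = σ x ⊔ σ y) := by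
  constructor
  · intro himp x y
    have hinf : ∀ u v : α, σ (u ⊓ v) = σ u ⊓ σ v := fun u v => by
      rw [A.state_inf hσ, himp, ← A.inf_eq_mul_imp]
    rw [A.sup_eq_inf_imp x y, hinf, himp, himp, himp, himp, ← A.sup_eq_inf_imp]
  · intro hsup x y
    have key : σ x ⊓ σ y ≤ σ (x ⊓ y) := by
      have ht : σ (A.imp x y) ⊔ σ (A.imp y x) = ⊤ := by
        rw [← hsup, A.sup_imp_eq_top, A.state_top hσ]
      have h1 : σ (A.imp x y) = A.imp (σ x) (σ (x ⊓ y)) := hσ.2.1 x y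
      have h1' : σ (A.imp y x) = A.imp (σ y) (σ (x ⊓ y)) := by
        rw [hσ.2.1 y x, inf_comm]
      calc σ x ⊓ σ y = A.mul (σ x ⊓ σ y) ⊤ := (A.mul_top _).symm
        _ = A.mul (σ x ⊓ σ y) (σ (A.imp x y)) ⊔ A.mul (σ x ⊓ σ y) (σ (A.imp y x)) := by
            rw [← A.mul_sup, ht]
        _ ≤ σ (x ⊓ y) := by
            refine sup_le ?_ ?_
            · rw [h1]
              calc A.mul (σ x ⊓ σ y) (A.imp (σ x) (σ (x ⊓ y)))
                  ≤ A.mul (σ x) (A.imp (σ x) (σ (x ⊓ y))) := A.mul_mono inf_le_left le_rfl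
                _ ≤ σ (x ⊓ y) := A.mul_imp_le _ _
            · rw [h1']
              calc A.mul (σ x ⊓ σ y) (A.imp (σ y) (σ (x ⊓ y)))
                  ≤ A.mul (σ y) (A.imp (σ y) (σ (x ⊓ y))) := A.mul_mono inf_le_right le_rfl
                _ ≤ σ (x ⊓ y) := A.mul_imp_le _ _
    rw [hσ.2.1 x y]
    refine le_antisymm (A.imp_mono_right _ (A.state_mono hσ inf_le_right)) ?_
    refine (A.le_imp_iff _ _ _).mpr ?_
    exact le_trans (by rw [← A.inf_eq_mul_imp]) key
end

section
/- Let A be a linearly ordered BL-algebra. Then: (1) every state-operator σ on A satisfies σ(x → y) = σ(x) → σ(y) for all x, y ∈ A; (2) every strong state-operator σ on A satisfies σ(x ⊙ y) = σ(x) ⊙ σ(y) for all x, y ∈ A. -/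
/-- on a linearly ordered BL-algebra, (1) every state-operator preserves →;
(2) every strong state-operator preserves ⊙. -/
theorem linear_stateOperator_preserves {α : Type*} [Lattice α] [BoundedOrder α]
    (A : BLAlgebra α) (hlin : ∀ x y : α, x ≤ y ∨ y ≤ x) :
    (∀ σ : α → α, A.IsStateOperator σ →
      ∀ x y : α, σ (A.imp x y) = A.imp (σ x) (σ y)) ∧
    (∀ σ : α → α, A.IsStrongStateOperator σ →
      ∀ x y : α, σ (A.mul x y) = A.mul (σ x) (σ y)) := by
  have imp_self : ∀ a : α, A.imp a a = ⊤ := fun a =>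
    le_antisymm le_top ((A.le_imp_iff a a ⊤).mpr (by rw [A.mul_top]))
  have mul_le_left : ∀ a b : α, A.mul a b ≤ a := fun a b =>
    (A.le_imp_iff a a b).mp (by rw [imp_self]; exact le_top)
  have le_iff_imp : ∀ a b : α, a ≤ b ↔ A.imp a b = ⊤ := fun a b => by
    constructor
    · intro h
      exact le_antisymm le_top ((A.le_imp_iff a b ⊤).mpr (by rw [A.mul_top]; exact h))
    · intro h
      have := (A.le_imp_iff a b ⊤).mp (le_of_eq h.symm)
      rwa [A.mul_top] at this
  have mul_le_mul_r : ∀ a b c : α, b ≤ c → A.mul a b ≤ A.mul a c := fun a b c h => by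
    have hc : c ≤ A.imp a (A.mul a c) := (A.le_imp_iff a (A.mul a c) c).mpr le_rfl
    exact (A.le_imp_iff a (A.mul a c) b).mp (h.trans hc)
  have eq_mul : ∀ x y : α, x ≤ y → x = A.mul y (A.imp y x) := fun x y h => by
    have := A.inf_eq_mul_imp y x
    rwa [inf_eq_right.mpr h] at this
  have mono : ∀ σ : α → α, (∀ a b : α, ∃ t, σ (A.mul a b) = A.mul (σ a) t) →
      ∀ x y : α, x ≤ y → σ x ≤ σ y := fun σ h3 x y hxy => by
    obtain ⟨t, ht⟩ := h3 y (A.imp y x)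
    rw [eq_mul x y hxy, ht]
    exact mul_le_left _ _
  refine ⟨?_, ?_⟩
  · rintro σ ⟨h1, h2, h3, h4, h5⟩ x y
    have hmono := mono σ (fun a b => ⟨_, h3 a b⟩)
    have htop : σ ⊤ = ⊤ := by
      have h := h2 ⊥ ⊥
      rw [imp_self, inf_idem, h1] at h
      rw [h, imp_self]
    rcases hlin x y with h | h
    · rw [(le_iff_imp x y).mp h, htop, (le_iff_imp (σ x) (σ y)).mp (hmono x y h)]
    · rw [h2 x y, inf_eq_right.mpr h]
  · rintro σ ⟨h1, h2, h3, h4, h5⟩ x y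
    have hmono := mono σ (fun a b => ⟨_, h3 a b⟩)
    rcases hlin (A.neg x) y with h | h
    · rw [h3 x y, sup_eq_right.mpr h]
    · have hneg : σ (A.neg x) = A.imp (σ x) ⊥ := by
        have h' := h2 x ⊥
        rwa [inf_bot_eq, h1] at h'
      have hxy : A.mul x y = ⊥ := le_bot_iff.mp (by
        have h0 : A.mul x (A.neg x) = ⊥ := by
          have h' := A.inf_eq_mul_imp x ⊥
          rw [inf_bot_eq] at h'
          exact h'.symm
        calc A.mul x y ≤ A.mul x (A.neg x) := mul_le_mul_r x y _ h
          _ = ⊥ := h0)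
      have hR : A.mul (σ x) (σ y) = ⊥ := le_bot_iff.mp (by
        have h0 : A.mul (σ x) (A.imp (σ x) ⊥) = ⊥ := by
          have h' := A.inf_eq_mul_imp (σ x) ⊥
          rw [inf_bot_eq] at h'
          exact h'.symm
        calc A.mul (σ x) (σ y) ≤ A.mul (σ x) (σ (A.neg x)) :=
              mul_le_mul_r _ _ _ (hmono _ _ h)
          _ = A.mul (σ x) (A.imp (σ x) ⊥) := by rw [hneg]
          _ = ⊥ := h0)
      rw [hxy, h1, hR]
end

section
/- Let A be a BL-algebra satisfying the Gödel identity x ⊙ x = x for all x ∈ A. Then every state-operator σ on A is a BL-endomorphism of A; in particular σ(x ∧ y) = σ(x ⊙ y) = σ(x) ⊙ σ(y) = σ(x) ∧ σ(y) and σ(x → y) = σ(x) → σ(y) for all x, y ∈ A. -/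
section GodelAux
variable {α : Type*} [Lattice α] [BoundedOrder α]

private lemma aux_imp_self (A : BLAlgebra α) (x : α) : A.imp x x = ⊤ :=
  le_antisymm le_top ((A.le_imp_iff x x ⊤).2 (le_of_eq (A.mul_top x)))

private lemma aux_mul_le_right (A : BLAlgebra α) (a b b' : α) (h : b ≤ b') :
    A.mul a b ≤ A.mul a b' :=
  (A.le_imp_iff a (A.mul a b') b).1
    (h.trans ((A.le_imp_iff a (A.mul a b') b').2 le_rfl))

private lemma aux_mul_mono (A : BLAlgebra α) {a a' b b' : α} (h1 : a ≤ a') (h2 : b ≤ b') :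
    A.mul a b ≤ A.mul a' b' := by
  calc A.mul a b ≤ A.mul a b' := aux_mul_le_right A a b b' h2
    _ = A.mul b' a := A.mul_comm a b'
    _ ≤ A.mul b' a' := aux_mul_le_right A b' a a' h1
    _ = A.mul a' b' := A.mul_comm b' a'

private lemma aux_mul_eq_inf (A : BLAlgebra α) (hg : ∀ x : α, A.mul x x = x) (x y : α) :
    A.mul x y = x ⊓ y := by
  apply le_antisymm
  · refine le_inf ?_ ?_
    · exact (A.le_imp_iff x x y).1 (by rw [aux_imp_self]; exact le_top)
    · rw [A.mul_comm]
      exact (A.le_imp_iff y y x).1 (by rw [aux_imp_self]; exact le_top)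
  · calc x ⊓ y = A.mul (x ⊓ y) (x ⊓ y) := (hg _).symm
      _ ≤ A.mul x y := aux_mul_mono A inf_le_left inf_le_right

section WithGodel
variable (A : BLAlgebra α) (hg : ∀ x : α, A.mul x x = x)
include hg

private lemma aux_le_imp (a b c : α) : c ≤ A.imp a b ↔ a ⊓ c ≤ b := by
  rw [A.le_imp_iff, aux_mul_eq_inf A hg]

private lemma aux_inf_imp (a b : α) : a ⊓ A.imp a b = a ⊓ b := by
  rw [← aux_mul_eq_inf A hg a (A.imp a b), ← A.inf_eq_mul_imp]

private lemma aux_imp_inf_right (a b : α) : A.imp a (a ⊓ b) = A.imp a b := by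
  apply le_antisymm
  · rw [aux_le_imp A hg]
    rw [aux_inf_imp A hg]
    exact inf_le_right.trans inf_le_right
  · rw [aux_le_imp A hg, aux_inf_imp A hg]

private lemma aux_le_imp_self (a b : α) : b ≤ A.imp a b :=
  (aux_le_imp A hg a b b).2 inf_le_right

private lemma aux_inf_sup_distrib (a b c : α) : a ⊓ (b ⊔ c) = (a ⊓ b) ⊔ (a ⊓ c) := by
  apply le_antisymm
  · have h : b ⊔ c ≤ A.imp a ((a ⊓ b) ⊔ (a ⊓ c)) :=
      sup_le ((aux_le_imp A hg _ _ _).2 le_sup_left)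
        ((aux_le_imp A hg _ _ _).2 le_sup_right)
    calc a ⊓ (b ⊔ c) ≤ a ⊓ A.imp a ((a ⊓ b) ⊔ (a ⊓ c)) := inf_le_inf_left a h
      _ = a ⊓ ((a ⊓ b) ⊔ (a ⊓ c)) := aux_inf_imp A hg _ _
      _ ≤ _ := inf_le_right
  · exact sup_le (inf_le_inf_left a le_sup_left) (inf_le_inf_left a le_sup_right)

private lemma aux_sup_eq (x y : α) :
    x ⊔ y = A.imp (A.imp x y) y ⊓ A.imp (A.imp y x) x := by
  apply le_antisymm
  · refine sup_le (le_inf ?_ ?_) (le_inf ?_ ?_)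
    · rw [aux_le_imp A hg, inf_comm, aux_inf_imp A hg]; exact inf_le_right
    · rw [aux_le_imp A hg]; exact inf_le_right
    · rw [aux_le_imp A hg]; exact inf_le_right
    · rw [aux_le_imp A hg, inf_comm, aux_inf_imp A hg]; exact inf_le_right
  · set u := A.imp (A.imp x y) y ⊓ A.imp (A.imp y x) x with hu
    have h1 : u ⊓ A.imp x y ≤ y := by
      calc u ⊓ A.imp x y ≤ A.imp (A.imp x y) y ⊓ A.imp x y :=
            inf_le_inf_right _ inf_le_left
        _ = A.imp x y ⊓ A.imp (A.imp x y) y := inf_comm _ _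
        _ = A.imp x y ⊓ y := aux_inf_imp A hg _ _
        _ ≤ y := inf_le_right
    have h2 : u ⊓ A.imp y x ≤ x := by
      calc u ⊓ A.imp y x ≤ A.imp (A.imp y x) x ⊓ A.imp y x :=
            inf_le_inf_right _ inf_le_right
        _ = A.imp y x ⊓ A.imp (A.imp y x) x := inf_comm _ _
        _ = A.imp y x ⊓ x := aux_inf_imp A hg _ _
        _ ≤ x := inf_le_right
    calc u = u ⊓ (A.imp x y ⊔ A.imp y x) := by rw [A.sup_imp_eq_top, inf_top_eq]
      _ = (u ⊓ A.imp x y) ⊔ (u ⊓ A.imp y x) := aux_inf_sup_distrib A hg _ _ _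
      _ ≤ y ⊔ x := sup_le (h1.trans le_sup_left) (h2.trans le_sup_right)
      _ = x ⊔ y := sup_comm _ _

variable (σ : α → α) (hσ : A.IsStateOperator σ)
include hσ

private lemma aux_key3 : ∀ x y : α, σ (x ⊓ y) = σ x ⊓ σ (A.imp x y) := by
  intro x y
  have h := hσ.2.2.1 x y
  rw [aux_mul_eq_inf A hg x y, aux_mul_eq_inf A hg (σ x), aux_imp_inf_right A hg] at h
  exact h

private lemma aux_inf_le_left : ∀ x y : α, σ (x ⊓ y) ≤ σ x := by
  intro x y
  have h := aux_key3 A hg σ hσ x y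
  rw [hσ.2.1 x y, aux_inf_imp A hg] at h
  rw [h]; exact inf_le_left

private lemma aux_mono : ∀ a b : α, a ≤ b → σ a ≤ σ b := by
  intro a b h
  have : σ (b ⊓ a) ≤ σ b := aux_inf_le_left A hg σ hσ b a
  rwa [inf_eq_right.2 h] at this

private lemma aux_sigma_inf : ∀ x y : α, σ (x ⊓ y) = σ x ⊓ σ y := by
  intro x y
  apply le_antisymm
  · refine le_inf (aux_inf_le_left A hg σ hσ x y) ?_
    rw [inf_comm]; exact aux_inf_le_left A hg σ hσ y x
  · calc σ x ⊓ σ y ≤ σ x ⊓ σ (A.imp x y) :=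
        inf_le_inf_left _ (aux_mono A hg σ hσ _ _ (aux_le_imp_self A hg x y))
      _ = σ (x ⊓ y) := (aux_key3 A hg σ hσ x y).symm

private lemma aux_sigma_imp : ∀ x y : α, σ (A.imp x y) = A.imp (σ x) (σ y) := by
  intro x y
  rw [hσ.2.1 x y, aux_sigma_inf A hg σ hσ, aux_imp_inf_right A hg]

end WithGodel
end GodelAux

/-- on a BL-algebra satisfying the Gödel identity x ⊙ x = x, every
state-operator is a BL-endomorphism; in particular
σ(x ∧ y) = σ(x ⊙ y) = σ(x) ⊙ σ(y) = σ(x) ∧ σ(y) and σ(x → y) = σ(x) → σ(y). -/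
theorem godel_stateOperator_endomorphism {α : Type*} [Lattice α] [BoundedOrder α]
    (A : BLAlgebra α) (hgodel : ∀ x : α, A.mul x x = x)
    (σ : α → α) (hσ : A.IsStateOperator σ) :
    (∀ x y : α, σ (x ⊓ y) = σ (A.mul x y) ∧
      σ (A.mul x y) = A.mul (σ x) (σ y) ∧
      A.mul (σ x) (σ y) = σ x ⊓ σ y) ∧
    (∀ x y : α, σ (A.imp x y) = A.imp (σ x) (σ y)) ∧
    (∀ x y : α, σ (x ⊔ y) = σ x ⊔ σ y) ∧
    σ ⊥ = ⊥ ∧ σ ⊤ = ⊤ := by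
  obtain ⟨h0, h2, h3, h4, h5⟩ := hσ
  have hσ' : A.IsStateOperator σ := ⟨h0, h2, h3, h4, h5⟩
  have hst : σ ⊤ = ⊤ := by
    have h := h2 ⊤ ⊤
    rw [aux_imp_self, inf_top_eq, aux_imp_self] at h
    exact h
  refine ⟨?_, aux_sigma_imp A hgodel σ hσ', ?_, h0, hst⟩
  · intro x y
    refine ⟨by rw [aux_mul_eq_inf A hgodel], ?_, by rw [aux_mul_eq_inf A hgodel]⟩
    rw [aux_mul_eq_inf A hgodel x y, aux_mul_eq_inf A hgodel (σ x) (σ y)]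
    exact aux_sigma_inf A hgodel σ hσ' x y
  · intro x y
    rw [aux_sup_eq A hgodel x y, aux_sigma_inf A hgodel σ hσ',
      aux_sigma_imp A hgodel σ hσ', aux_sigma_imp A hgodel σ hσ',
      aux_sigma_imp A hgodel σ hσ', aux_sigma_imp A hgodel σ hσ',
      ← aux_sup_eq A hgodel (σ x) (σ y)]
end

section
/- If σ is a state-operator on the standard Łukasiewicz BL-algebra 𝕀_Ł on the real interval [0,1], then σ(x) = x for every x ∈ [0,1]. -/
/-- every state-operator on the standard Łukasiewicz BL-algebra on [0,1]
is the identity. -/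
theorem lukasiewicz_stateOperator_eq_id (A : BLAlgebra unitInterval)
    (hmul : ∀ x y : unitInterval, (A.mul x y : ℝ) = max ((x : ℝ) + (y : ℝ) - 1) 0)
    (himp : ∀ x y : unitInterval, (A.imp x y : ℝ) = min (1 - (x : ℝ) + (y : ℝ)) 1)
    (σ : unitInterval → unitInterval) (hσ : A.IsStateOperator σ) :
    ∀ x : unitInterval, σ x = x := by
  obtain ⟨h1, h2, _h3, _h4, _h5⟩ := hσ
  have hb : ((⊥ : unitInterval) : ℝ) = 0 := rfl
  have ht : ((⊤ : unitInterval) : ℝ) = 1 := rfl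
  have hs0 : ((σ ⊥ : unitInterval) : ℝ) = 0 := by rw [h1]; exact hb
  -- σ ⊤ = ⊤
  have hs1 : ((σ ⊤ : unitInterval) : ℝ) = 1 := by
    have hbotimp : A.imp ⊥ ⊥ = ⊤ := by
      apply Subtype.ext
      rw [himp, hb, ht]; norm_num
    have e := h2 ⊥ ⊥
    rw [hbotimp, inf_idem, h1] at e
    rw [e, himp, hb]; norm_num
  -- negation : σ (x → 0) = 1 - σ x
  have hneg : ∀ z : unitInterval, ((σ (A.imp z ⊥) : unitInterval) : ℝ) = 1 - (σ z : ℝ) := by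
    intro z
    have e := h2 z ⊥
    rw [inf_bot_eq, h1] at e
    rw [e, himp, hb, add_zero, min_eq_left (by linarith [(σ z).2.1])]
  -- key : subtraction lemma
  have key : ∀ a b : unitInterval, b ≤ a →
      ∃ d : unitInterval, (d : ℝ) = (a : ℝ) - (b : ℝ) ∧
        ((σ d : unitInterval) : ℝ) = max ((σ a : ℝ) - (σ b : ℝ)) 0 := by
    intro a b hle
    have hba : (b : ℝ) ≤ a := hle
    have e1 : (A.imp a b : ℝ) = 1 - (a : ℝ) + b := by
      rw [himp]; exact min_eq_left (by linarith)
    refine ⟨A.imp (A.imp a b) ⊥, ?_, ?_⟩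
    · rw [himp, e1, hb, min_eq_left (by linarith [a.2.2, b.2.1])]; ring
    · rw [hneg]
      have e2 := h2 a b
      rw [inf_eq_right.mpr hle] at e2
      rw [e2, himp]
      have hsa1 := (σ a).2.2
      have hsb0 := (σ b).2.1
      rcases le_or_gt (1 - (σ a : ℝ) + (σ b : ℝ)) 1 with h | h
      · rw [min_eq_left h, max_eq_left (by linarith)]; ring
      · rw [min_eq_right h.le, max_eq_right (by linarith)]; ring
  -- monotonicity
  have hmono : ∀ a b : unitInterval, b ≤ a → (σ b : ℝ) ≤ (σ a : ℝ) := by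
    intro a b hle
    obtain ⟨d, hd, hsd⟩ := key a b hle
    have hda : d ≤ a := by
      show (d : ℝ) ≤ a
      rw [hd]; linarith [b.2.1]
    obtain ⟨d', hd', hsd'⟩ := key a d hda
    have hdb : d' = b := Subtype.ext (by rw [hd', hd]; ring)
    rw [hdb] at hsd'
    rw [hsd']
    have := (σ d).2.1
    have := (σ a).2.1
    exact max_le (by linarith) (by linarith)
  -- additivity
  have hadd : ∀ a b c : unitInterval, (c : ℝ) = (a : ℝ) + b →
      (σ c : ℝ) = (σ a : ℝ) + (σ b : ℝ) := by
    intro a b c hc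
    have hbc : b ≤ c := by
      show (b : ℝ) ≤ c
      rw [hc]; linarith [a.2.1]
    obtain ⟨d, hd, hsd⟩ := key c b hbc
    have hda : d = a := Subtype.ext (by rw [hd, hc]; ring)
    rw [hda] at hsd
    have hm := hmono c b hbc
    rw [max_eq_left (by linarith)] at hsd
    linarith
  -- natural multiples
  have hnat : ∀ (m : ℕ) (x c : unitInterval), (c : ℝ) = (m : ℝ) * x →
      (σ c : ℝ) = (m : ℝ) * (σ x : ℝ) := by
    intro m
    induction m with
    | zero =>
      intro x c hc
      have : c = ⊥ := Subtype.ext (by rw [hc]; simp [hb])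
      rw [this, h1]; simp [hb]
    | succ n ih =>
      intro x c hc
      have hx0 := x.2.1
      have hmem : (n : ℝ) * (x : ℝ) ∈ Set.Icc (0 : ℝ) 1 := by
        constructor
        · positivity
        · have h1' : (n : ℝ) * x ≤ ((n : ℕ) + 1 : ℝ) * x := by nlinarith
          have h2' : (c : ℝ) ≤ 1 := c.2.2
          rw [hc] at h2'
          push_cast at h1' h2' ⊢
          linarith
      set u : unitInterval := ⟨(n : ℝ) * x, hmem⟩ with hu
      have hcu : (c : ℝ) = (u : ℝ) + x := by rw [hc]; push_cast; ring
      have := hadd u x c hcu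
      have hiu := ih x u rfl
      rw [this, hiu]; push_cast; ring
  -- rationals are fixed
  have hrat : ∀ (q : ℚ) (c : unitInterval), (c : ℝ) = (q : ℝ) → (σ c : ℝ) = (q : ℝ) := by
    intro q c hc
    have hq0 : (0 : ℝ) ≤ q := by rw [← hc]; exact c.2.1
    have hq0' : (0 : ℚ) ≤ q := by exact_mod_cast hq0
    have hn : (0 : ℝ) < (q.den : ℝ) := by positivity
    have humem : 1 / (q.den : ℝ) ∈ Set.Icc (0 : ℝ) 1 := by
      constructor
      · positivity
      · rw [div_le_one hn]; exact_mod_cast q.pos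
    set u : unitInterval := ⟨1 / (q.den : ℝ), humem⟩ with hu
    have htop : ((⊤ : unitInterval) : ℝ) = (q.den : ℝ) * u := by
      rw [ht]; show (1:ℝ) = (q.den : ℝ) * (1 / (q.den : ℝ)); field_simp
    have h1u := hnat q.den u ⊤ htop
    rw [hs1] at h1u
    have hsu : (σ u : ℝ) = 1 / (q.den : ℝ) := by
      field_simp at h1u ⊢
      linarith
    have hnum : ((q.num.toNat : ℕ) : ℝ) = (q.num : ℝ) := by
      exact_mod_cast Int.toNat_of_nonneg (Rat.num_nonneg.mpr hq0')
    have hcm : (c : ℝ) = (q.num.toNat : ℝ) * u := by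
      rw [hc, hnum]
      rw [Rat.cast_def]
      show (q.num : ℝ) / (q.den : ℝ) = (q.num : ℝ) * (1 / (q.den : ℝ))
      field_simp
    have := hnat q.num.toNat u c hcm
    rw [this, hsu, hnum, Rat.cast_def]
    field_simp
  -- conclusion
  intro x
  apply Subtype.ext
  by_contra hne
  rcases lt_or_gt_of_ne hne with h | h
  · obtain ⟨q, hq1, hq2⟩ := exists_rat_btwn h
    have hc0 : (0 : ℝ) ≤ q := le_trans (σ x).2.1 hq1.le
    have hc1 : (q : ℝ) ≤ 1 := le_trans hq2.le x.2.2
    set c : unitInterval := ⟨(q : ℝ), hc0, hc1⟩ with hcdef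
    have hcx : c ≤ x := by
      show (c : ℝ) ≤ x
      exact hq2.le
    have hm := hmono x c hcx
    rw [hrat q c rfl] at hm
    linarith
  · obtain ⟨q, hq1, hq2⟩ := exists_rat_btwn h
    have hc0 : (0 : ℝ) ≤ q := le_trans x.2.1 hq1.le
    have hc1 : (q : ℝ) ≤ 1 := le_trans hq2.le (σ x).2.2
    set c : unitInterval := ⟨(q : ℝ), hc0, hc1⟩ with hcdef
    have hxc : x ≤ c := by
      show (x : ℝ) ≤ c
      exact hq1.le
    have hm := hmono c x hxc
    rw [hrat q c rfl] at hm
    linarith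
end

section
/- For a ∈ [0,1] define σ_a : [0,1] → [0,1] by σ_a(x) = x if x ≤ a and σ_a(x) = 1 otherwise, and for a ∈ (0,1] define σ^a(x) = x if x < a and σ^a(x) = 1 otherwise. Then each σ_a and each σ^a is a state-operator on the standard Gödel BL-algebra 𝕀_G that preserves ⊙ and →; conversely, every state-operator σ on 𝕀_G equals σ_a or σ^a for some a ∈ [0,1]. -/
open Classical in
/-- `σ_a`: the identity below `a`, and `1` above. -/
noncomputable def godelLow (a : unitInterval) (x : unitInterval) : unitInterval :=
  if x ≤ a then x else 1

open Classical in
/-- `σ^a`: the identity strictly below `a`, and `1` elsewhere. -/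
noncomputable def godelHigh (a : unitInterval) (x : unitInterval) : unitInterval :=
  if x < a then x else 1

section aux
open Classical

noncomputable def G (x y : unitInterval) : unitInterval := if x ≤ y then 1 else y

lemma unit_bot : (⊥ : unitInterval) = 0 := rfl
lemma unit_top : (⊤ : unitInterval) = 1 := rfl

lemma G_self (x : unitInterval) : G x x = 1 := by simp [G]

lemma G_inf (x y : unitInterval) : G x (x ⊓ y) = G x y := by
  rcases le_total x y with h | h
  · rw [inf_eq_left.2 h, G_self, G, if_pos h]
  · rw [inf_eq_right.2 h]

lemma unit_le_one (x : unitInterval) : x ≤ 1 := le_top.trans_eq unit_top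

lemma inf_G (x y : unitInterval) : x ⊓ G x y = x ⊓ y := by
  unfold G; split
  · rw [inf_eq_left.2 (unit_le_one x), inf_eq_left.2 ‹x ≤ y›]
  · rfl

lemma G_one (y : unitInterval) : G 1 y = y := by
  unfold G; split
  · exact (le_antisymm (unit_le_one y) ‹_›).symm
  · rfl

lemma G_eq_one_of_le {x y : unitInterval} (h : x ≤ y) : G x y = 1 := by
  simp [G, h]

lemma G_eq_of_lt {x y : unitInterval} (h : y < x) : G x y = y := by
  simp [G, not_le.2 h]

variable (A : BLAlgebra unitInterval)
variable (hmul : ∀ x y : unitInterval, A.mul x y = x ⊓ y)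
variable (himp : ∀ x y : unitInterval, (A.imp x y : ℝ) = if (x : ℝ) ≤ (y : ℝ) then 1 else (y : ℝ))

include himp in
lemma imp_eq_G : ∀ x y : unitInterval, A.imp x y = G x y := by
  intro x y
  apply Subtype.ext
  rw [himp x y]
  by_cases h : x ≤ y
  · rw [G_eq_one_of_le h, if_pos (Subtype.coe_le_coe.2 h)]
    simp
  · rw [G_eq_of_lt (not_le.1 h), if_neg (fun hr => h (Subtype.coe_le_coe.1 hr))]

include hmul himp in
lemma generic_state (σ : unitInterval → unitInterval) (h0 : σ 0 = 0)
    (hInf : ∀ x y, σ (x ⊓ y) = σ x ⊓ σ y)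
    (hG : ∀ x y, σ (G x y) = G (σ x) (σ y))
    (hIdem : ∀ x, σ (σ x) = σ x) :
    A.IsStateOperator σ ∧
    (∀ x y : unitInterval, σ (A.mul x y) = A.mul (σ x) (σ y)) ∧
    (∀ x y : unitInterval, σ (A.imp x y) = A.imp (σ x) (σ y)) := by
  have hi := imp_eq_G A himp
  refine ⟨⟨?_, ?_, ?_, ?_, ?_⟩, ?_, ?_⟩
  · rw [unit_bot]; exact h0
  · intro x y
    simp only [hi]
    rw [hG, hInf, G_inf]
  · intro x y
    simp only [hmul, hi]
    rw [hInf, G_inf, hG, inf_G]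
  · intro x y
    simp only [hmul]
    rw [hInf, hIdem, hIdem]
  · intro x y
    simp only [hi]
    rw [hG, hIdem, hIdem]
  · intro x y
    simp only [hmul]; exact hInf x y
  · intro x y
    simp only [hi]; exact hG x y

-- facts about godelLow
lemma godelLow_mono (a : unitInterval) : Monotone (godelLow a) := by
  intro x y h
  unfold godelLow
  by_cases hx : x ≤ a
  · by_cases hy : y ≤ a
    · simpa [hx, hy]
    · simp [hx, hy, unit_le_one]
  · have : ¬ y ≤ a := fun hy => hx (h.trans hy)
    simp [hx, this]

lemma godelLow_inf (a x y : unitInterval) :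
    godelLow a (x ⊓ y) = godelLow a x ⊓ godelLow a y := by
  rcases le_total x y with h | h
  · rw [inf_eq_left.2 h, inf_eq_left.2 (godelLow_mono a h)]
  · rw [inf_eq_right.2 h, inf_eq_right.2 (godelLow_mono a h)]

lemma godelLow_one (a : unitInterval) : godelLow a 1 = 1 := by
  unfold godelLow; split <;> rfl

lemma godelLow_idem (a x : unitInterval) : godelLow a (godelLow a x) = godelLow a x := by
  by_cases h : x ≤ a
  · rw [show godelLow a x = x from if_pos h, show godelLow a x = x from if_pos h]
  · rw [show godelLow a x = 1 from if_neg h, godelLow_one]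

lemma godelLow_G (a x y : unitInterval) :
    godelLow a (G x y) = G (godelLow a x) (godelLow a y) := by
  rcases le_or_gt x y with h | h
  · rw [G_eq_one_of_le h, G_eq_one_of_le (godelLow_mono a h), godelLow_one]
  · rw [G_eq_of_lt h]
    by_cases hx : x ≤ a
    · have hy : y ≤ a := (h.le.trans hx)
      rw [show godelLow a x = x from if_pos hx, show godelLow a y = y from if_pos hy,
        G_eq_of_lt h]
    · rw [show godelLow a x = 1 from if_neg hx, G_one]

-- facts about godelHigh
lemma godelHigh_mono (a : unitInterval) : Monotone (godelHigh a) := by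
  intro x y h
  unfold godelHigh
  by_cases hx : x < a
  · by_cases hy : y < a
    · simpa [hx, hy]
    · simp [hx, hy, unit_le_one]
  · have : ¬ y < a := fun hy => hx (lt_of_le_of_lt h hy)
    simp [hx, this]

lemma godelHigh_inf (a x y : unitInterval) :
    godelHigh a (x ⊓ y) = godelHigh a x ⊓ godelHigh a y := by
  rcases le_total x y with h | h
  · rw [inf_eq_left.2 h, inf_eq_left.2 (godelHigh_mono a h)]
  · rw [inf_eq_right.2 h, inf_eq_right.2 (godelHigh_mono a h)]

lemma godelHigh_one (a : unitInterval) : godelHigh a 1 = 1 := by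
  unfold godelHigh; split <;> rfl

lemma godelHigh_idem (a x : unitInterval) : godelHigh a (godelHigh a x) = godelHigh a x := by
  by_cases h : x < a
  · rw [show godelHigh a x = x from if_pos h, show godelHigh a x = x from if_pos h]
  · rw [show godelHigh a x = 1 from if_neg h, godelHigh_one]

lemma godelHigh_G (a x y : unitInterval) :
    godelHigh a (G x y) = G (godelHigh a x) (godelHigh a y) := by
  rcases le_or_gt x y with h | h
  · rw [G_eq_one_of_le h, G_eq_one_of_le (godelHigh_mono a h), godelHigh_one]
  · rw [G_eq_of_lt h]
    by_cases hx : x < a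
    · have hy : y < a := h.trans hx
      rw [show godelHigh a x = x from if_pos hx, show godelHigh a y = y from if_pos hy,
        G_eq_of_lt h]
    · rw [show godelHigh a x = 1 from if_neg hx, G_one]

end aux

section conv
open Classical
variable (A : BLAlgebra unitInterval)
variable (hmul : ∀ x y : unitInterval, A.mul x y = x ⊓ y)
variable (himp : ∀ x y : unitInterval, (A.imp x y : ℝ) = if (x : ℝ) ≤ (y : ℝ) then 1 else (y : ℝ))

include hmul himp in
lemma godel_converse (σ : unitInterval → unitInterval) (hσ : A.IsStateOperator σ) :
    ∃ a : unitInterval, σ = godelLow a ∨ σ = godelHigh a := by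
  obtain ⟨h1, h2, h3, h4, h5⟩ := hσ
  have hi := imp_eq_G A himp
  rw [unit_bot] at h1
  have hone : σ 1 = 1 := by
    have h := h2 ⊥ ⊥
    rw [hi, hi, inf_idem, unit_bot, h1, G_self] at h
    exact h
  have hidem : ∀ x, σ (σ x) = σ x := by
    intro x
    have h := h4 x x
    simp only [hmul] at h
    rwa [inf_idem] at h
  have hstar : ∀ x y : unitInterval, y < x → σ y = G (σ x) (σ y) := by
    intro x y h
    have hh := h2 x y
    rwa [hi, hi, inf_eq_right.2 h.le, G_eq_of_lt h] at hh
  have hmono : Monotone σ := by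
    intro y x h
    rcases h.lt_or_eq with h | h
    · have hh := h3 x y
      simp only [hmul] at hh
      rw [hi, G_inf, inf_eq_right.2 h.le] at hh
      exact hh.le.trans inf_le_left
    · rw [h]
  have hle : ∀ x, x ≤ σ x := by
    intro x
    by_contra hc
    push_neg at hc
    have h := hstar x (σ x) hc
    rw [hidem, G_self] at h
    exact absurd h (ne_of_lt (hc.trans_le (unit_le_one x)))
  have hdich : ∀ x, σ x = x ∨ σ x = 1 := by
    intro x
    rcases (hle x).lt_or_eq with h | h
    · right
      have hh := hstar (σ x) x h
      rwa [hidem, G_self] at hh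
    · left; exact h.symm
  set Tr : Set ℝ := (fun z : unitInterval => (z : ℝ)) '' {x | σ x = 1} with hTr
  have hTne : Tr.Nonempty := ⟨1, ⟨1, hone, rfl⟩⟩
  have hTbdd : BddBelow Tr := ⟨0, fun r ⟨x, _, hx⟩ => hx ▸ x.2.1⟩
  have har0 : 0 ≤ sInf Tr := le_csInf hTne (fun r ⟨x, _, hx⟩ => hx ▸ x.2.1)
  have har1 : sInf Tr ≤ 1 := csInf_le hTbdd ⟨1, hone, rfl⟩
  set a : unitInterval := ⟨sInf Tr, har0, har1⟩ with haDef
  have ha_le : ∀ x, σ x = 1 → a ≤ x := fun x hx =>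
    Subtype.coe_le_coe.1 (csInf_le hTbdd ⟨x, hx, rfl⟩)
  have ha_lt : ∀ x, a < x → σ x = 1 := by
    intro x hx
    obtain ⟨r, ⟨t, ht, rfl⟩, hrx⟩ :=
      exists_lt_of_csInf_lt hTne (show sInf Tr < (x : ℝ) from hx)
    have hmx : σ t ≤ σ x := hmono (le_of_lt hrx)
    exact le_antisymm (unit_le_one _) (ht ▸ hmx)
  rcases hdich a with ha | ha
  · refine ⟨a, Or.inl (funext fun x => ?_)⟩
    by_cases h : x ≤ a
    · rw [show godelLow a x = x from if_pos h]
      rcases h.lt_or_eq with h' | h'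
      · rcases hdich x with h'' | h''
        · exact h''
        · exact absurd (ha_le x h'') (not_le.2 h')
      · rw [h']; exact ha
    · rw [show godelLow a x = 1 from if_neg h]
      exact ha_lt x (not_le.1 h)
  · refine ⟨a, Or.inr (funext fun x => ?_)⟩
    by_cases h : x < a
    · rw [show godelHigh a x = x from if_pos h]
      rcases hdich x with h'' | h''
      · exact h''
      · exact absurd (ha_le x h'') (not_le.2 h)
    · rw [show godelHigh a x = 1 from if_neg h]
      rcases (not_lt.1 h).lt_or_eq with h' | h'
      · exact ha_lt x h'
      · rw [← h']; exact ha

end conv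

/-- each `σ_a` (a ∈ [0,1]) and each `σ^a` (a ∈ (0,1]) is a state-operator on
the standard Gödel BL-algebra on [0,1] preserving ⊙ and →; conversely, every state-operator
on it equals some `σ_a` or some `σ^a`. -/
theorem godel_stateOperators (A : BLAlgebra unitInterval)
    (hmul : ∀ x y : unitInterval, A.mul x y = x ⊓ y)
    (himp : ∀ x y : unitInterval, (A.imp x y : ℝ) = if (x : ℝ) ≤ (y : ℝ) then 1 else (y : ℝ)) :
    (∀ a : unitInterval,
      A.IsStateOperator (godelLow a) ∧
      (∀ x y : unitInterval, godelLow a (A.mul x y) = A.mul (godelLow a x) (godelLow a y)) ∧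
      (∀ x y : unitInterval, godelLow a (A.imp x y) = A.imp (godelLow a x) (godelLow a y))) ∧
    (∀ a : unitInterval, 0 < a →
      A.IsStateOperator (godelHigh a) ∧
      (∀ x y : unitInterval, godelHigh a (A.mul x y) = A.mul (godelHigh a x) (godelHigh a y)) ∧
      (∀ x y : unitInterval, godelHigh a (A.imp x y) = A.imp (godelHigh a x) (godelHigh a y))) ∧
    (∀ σ : unitInterval → unitInterval, A.IsStateOperator σ →
      ∃ a : unitInterval, σ = godelLow a ∨ σ = godelHigh a) := by
  
  refine ⟨fun a => ?_, fun a ha => ?_, fun σ hσ => godel_converse A hmul himp σ hσ⟩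
  · exact generic_state A hmul himp (godelLow a)
      (if_pos (unitInterval.nonneg' : (0:unitInterval) ≤ a))
      (godelLow_inf a) (godelLow_G a) (godelLow_idem a)
  · exact generic_state A hmul himp (godelHigh a)
      (if_pos ha)
      (godelHigh_inf a) (godelHigh_G a) (godelHigh_idem a)
end

section
/- If σ is a state-operator on the standard product BL-algebra 𝕀_P on the real interval [0,1], then either σ(x) = x for every x ∈ [0,1], or σ(0) = 0 and σ(x) = 1 for every x > 0. -/

private lemma exists_rat_pow_btwn' (β u v : ℝ) (hβ0 : 0 < β) (hβ1 : β < 1) (hu : 0 < u)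
    (huv : u < v) (hv : v ≤ 1) : ∃ q : ℚ, 0 < q ∧ u < β ^ (q:ℝ) ∧ β ^ (q:ℝ) < v := by
  have hlogβ : Real.log β < 0 := Real.log_neg hβ0 hβ1
  have hlv : Real.log v ≤ 0 := Real.log_nonpos (by linarith) hv
  have hluv : Real.log u < Real.log v := Real.log_lt_log hu huv
  have hdiv : Real.log v / Real.log β < Real.log u / Real.log β :=
    div_lt_div_of_neg_of_lt hlogβ hluv
  obtain ⟨q, hq1, hq2⟩ := exists_rat_btwn hdiv
  refine ⟨q, ?_, ?_, ?_⟩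
  · have h0 : (0:ℝ) ≤ Real.log v / Real.log β := div_nonneg_of_nonpos hlv hlogβ.le
    exact_mod_cast h0.trans_lt hq1
  · have h : (q:ℝ) * Real.log β > Real.log u := by
      have := (lt_div_iff_of_neg hlogβ).mp hq2
      linarith
    calc u = Real.exp (Real.log u) := (Real.exp_log hu).symm
    _ < Real.exp ((q:ℝ) * Real.log β) := Real.exp_lt_exp.mpr h
    _ = β ^ (q:ℝ) := by rw [Real.rpow_def_of_pos hβ0, mul_comm]
  · have h : (q:ℝ) * Real.log β < Real.log v := by
      have := (div_lt_iff_of_neg hlogβ).mp hq1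
      linarith
    calc β ^ (q:ℝ) = Real.exp ((q:ℝ) * Real.log β) := by
          rw [Real.rpow_def_of_pos hβ0, mul_comm]
    _ < Real.exp (Real.log v) := Real.exp_lt_exp.mpr h
    _ = v := Real.exp_log (by linarith)

/-- every state-operator on the standard product BL-algebra on [0,1] is either
the identity, or maps 0 to 0 and every x > 0 to 1. -/
theorem product_stateOperator (A : BLAlgebra unitInterval)
    (hmul : ∀ x y : unitInterval, (A.mul x y : ℝ) = (x : ℝ) * (y : ℝ))
    (himp : ∀ x y : unitInterval,
      (A.imp x y : ℝ) = if (x : ℝ) ≤ (y : ℝ) then 1 else (y : ℝ) / (x : ℝ))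
    (σ : unitInterval → unitInterval) (hσ : A.IsStateOperator σ) :
    (∀ x : unitInterval, σ x = x) ∨
    (σ 0 = 0 ∧ ∀ x : unitInterval, 0 < (x : ℝ) → σ x = 1) := by

  obtain ⟨h1, h2, h3, h4, h5⟩ := hσ
  have hbot : ((⊥ : unitInterval) : ℝ) = 0 := rfl
  have htop : ((⊤ : unitInterval) : ℝ) = 1 := rfl
  -- σ ⊤ = ⊤
  have hs1 : σ ⊤ = ⊤ := by
    have h := h2 ⊤ ⊤
    have e1 : A.imp (⊤:unitInterval) ⊤ = ⊤ := Subtype.ext (by rw [himp]; simp [htop])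
    rw [e1, inf_idem] at h
    refine Subtype.ext ?_
    rw [h, himp, htop]
    simp
  -- idempotence
  have hid : ∀ x, σ (σ x) = σ x := by
    intro x
    have h := h4 x ⊤
    rwa [hs1, A.mul_top] at h
  -- monotonicity
  have hmono : ∀ x y : unitInterval, x ≤ y → (σ x : ℝ) ≤ (σ y : ℝ) := by
    intro x y hxy
    have hx : A.mul y (A.imp y x) = x := by
      rw [← A.inf_eq_mul_imp, inf_eq_right.mpr hxy]
    have h := h3 y (A.imp y x)
    rw [hx] at h
    have hc : (σ x : ℝ) = (σ y : ℝ) * (σ (A.imp y x) : ℝ) := by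
      rw [h, hmul]
    rw [hc]
    exact mul_le_of_le_one_right (σ y).2.1 (σ (A.imp y x)).2.2
  -- positivity
  have hpos : ∀ x : unitInterval, 0 < (x:ℝ) → 0 < (σ x : ℝ) := by
    intro x hx
    rcases (σ x).2.1.lt_or_eq with h | h
    · exact h
    · exfalso
      have e1 : A.imp x ⊥ = ⊥ := by
        refine Subtype.ext ?_
        rw [himp, hbot, if_neg (by linarith)]
        simp
      have h' := h2 x ⊥
      rw [e1, inf_bot_eq, h1] at h'
      have hc : ((⊥:unitInterval) : ℝ) = (A.imp (σ x) ⊥ : ℝ) := by rw [← h']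
      rw [hbot, himp, hbot, if_pos (le_of_eq h.symm)] at hc
      norm_num at hc
  -- coe of pow
  have hpowco : ∀ (x : unitInterval) (n : ℕ), ((A.pow x n : unitInterval) : ℝ) = (x:ℝ)^n := by
    intro x n
    induction n with
    | zero => exact htop
    | succ n ih => rw [BLAlgebra.pow, hmul, ih, pow_succ]
  -- multiplicative step
  have hstep : ∀ (x p : unitInterval), 0 < (x:ℝ) →
      (σ (A.mul x p) : ℝ) = (σ x:ℝ) * (σ p:ℝ) := by
    intro x p hx
    have e : A.imp x (A.mul x p) = p := by
      refine Subtype.ext ?_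
      rw [himp, hmul]
      by_cases hc : (x:ℝ) ≤ (x:ℝ) * (p:ℝ)
      · rw [if_pos hc]
        have h1p : (1:ℝ) ≤ (p:ℝ) := by
          have := (mul_le_mul_iff_right₀ hx).mp (by linarith : (x:ℝ) * 1 ≤ (x:ℝ) * (p:ℝ))
          linarith
        linarith [p.2.2]
      · rw [if_neg hc, mul_comm, mul_div_assoc, div_self (ne_of_gt hx), mul_one]
    have h := h3 x p
    rw [e] at h
    rw [h, hmul]
  -- powers of sigma
  have hsigpow : ∀ (x : unitInterval), 0 < (x:ℝ) → ∀ n : ℕ,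
      (σ (A.pow x n) : ℝ) = (σ x:ℝ)^n := by
    intro x hx n
    induction n with
    | zero => rw [BLAlgebra.pow, hs1, htop, pow_zero]
    | succ n ih =>
      have e : A.pow x (n+1) = A.mul x (A.pow x n) := by
        rw [BLAlgebra.pow, A.mul_comm]
      rw [e, hstep x _ hx, ih, pow_succ]
      ring
  by_cases hall : ∀ x : unitInterval, 0 < (x:ℝ) → σ x = 1
  · right
    refine ⟨?_, hall⟩
    have : (⊥ : unitInterval) = 0 := Subtype.ext rfl
    rw [← this, h1]
  · left
    push_neg at hall
    obtain ⟨a, ha, hane⟩ := hall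
    set b := σ a with hbdef
    have hb0 : 0 < (b:ℝ) := hpos a ha
    have hb1 : (b:ℝ) < 1 := by
      rcases b.2.2.lt_or_eq with h | h
      · exact h
      · exact absurd (Subtype.ext (h.trans htop.symm) : b = ⊤) (by
          intro hb; exact hane (hb.trans (Subtype.ext rfl)))
    have hbfix : σ b = b := hid a
    -- fixed points b^q for rational q > 0
    have hfixq : ∀ q : ℚ, 0 < q → ∀ w : unitInterval, (w:ℝ) = (b:ℝ) ^ (q:ℝ) → σ w = w := by
      intro q hq w hw
      set m := q.num.toNat with hmdef
      set n := q.den with hndef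
      have hnumpos : (0:ℤ) < q.num := Rat.num_pos.mpr hq
      have hm : 0 < m := by omega
      have hn : 0 < n := q.pos
      have hqval : (q:ℝ) = (m:ℝ)/(n:ℝ) := by
        have hmz : (m:ℝ) = (q.num:ℝ) := by
          exact_mod_cast congrArg (fun z : ℤ => (z:ℝ)) (Int.toNat_of_nonneg hnumpos.le)
        rw [Rat.cast_def, ← hmz]
      have hwn : (w:ℝ)^n = (b:ℝ)^m := by
        rw [hw, ← Real.rpow_natCast ((b:ℝ) ^ (q:ℝ)) n, ← Real.rpow_mul hb0.le,
          hqval, div_mul_cancel₀, Real.rpow_natCast]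
        exact Nat.cast_ne_zero.mpr hn.ne'
      have hA : (σ (A.pow a m) : ℝ) = (b:ℝ)^m := hsigpow a ha m
      have hB : A.pow w n = σ (A.pow a m) := Subtype.ext (by rw [hpowco, hwn, hA])
      have hw0 : 0 < (w:ℝ) := by rw [hw]; exact Real.rpow_pos_of_pos hb0 _
      have hC : (σ w : ℝ)^n = (w:ℝ)^n := by
        rw [← hsigpow w hw0 n, hB, hid, hA, ← hwn]
      exact Subtype.ext ((pow_left_strictMonoOn₀ hn.ne').injOn (σ w).2.1 w.2.1 hC)
    -- the identity on all of [0,1]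
    intro x
    rcases x.2.1.lt_or_eq with hx0 | hx0
    swap
    · have : x = ⊥ := Subtype.ext hx0.symm
      rw [this, h1]
    rcases x.2.2.lt_or_eq with hx1 | hx1
    swap
    · have : x = ⊤ := Subtype.ext hx1
      rw [this, hs1]
    refine Subtype.ext ?_
    refine le_antisymm ?_ ?_
    · by_contra hcon
      push_neg at hcon
      obtain ⟨q, hq, hq1, hq2⟩ :=
        exists_rat_pow_btwn' (b:ℝ) (x:ℝ) (σ x:ℝ) hb0 hb1 hx0 hcon (σ x).2.2
      set w : unitInterval := ⟨(b:ℝ)^(q:ℝ),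
        ⟨Real.rpow_nonneg hb0.le _, Real.rpow_le_one hb0.le b.2.2 (by exact_mod_cast hq.le)⟩⟩
      have hwfix : σ w = w := hfixq q hq w rfl
      have hxw : x ≤ w := Subtype.coe_le_coe.mp hq1.le
      have := hmono x w hxw
      rw [hwfix] at this
      exact absurd (this.trans_lt hq2) (lt_irrefl _)
    · by_contra hcon
      push_neg at hcon
      obtain ⟨q, hq, hq1, hq2⟩ :=
        exists_rat_pow_btwn' (b:ℝ) (σ x:ℝ) (x:ℝ) hb0 hb1 (hpos x hx0) hcon x.2.2
      set w : unitInterval := ⟨(b:ℝ)^(q:ℝ),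
        ⟨Real.rpow_nonneg hb0.le _, Real.rpow_le_one hb0.le b.2.2 (by exact_mod_cast hq.le)⟩⟩
      have hwfix : σ w = w := hfixq q hq w rfl
      have hwx : w ≤ x := Subtype.coe_le_coe.mp hq2.le
      have := hmono w x hwx
      rw [hwfix] at this
      exact absurd (lt_of_lt_of_le hq1 this) (lt_irrefl _)
end

section
/- Let σ be a state-operator on a BL-algebra A. Then Rad(σ(A)) ⊆ σ(Rad(A)). If moreover σ is a strong state-operator, then σ(Rad(A)) = Rad(σ(A)). -/
section BLAux

open BLAlgebra

variable {α : Type*} [Lattice α] [BoundedOrder α]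

namespace BLAux

variable (A : BLAlgebra α)

lemma imp_le (a b : α) : A.mul a (A.imp a b) ≤ b := (A.le_imp_iff a b _).mp le_rfl

lemma le_of_imp_eq_top {a b : α} (h : A.imp a b = ⊤) : a ≤ b := by
  have h2 := imp_le A a b
  rwa [h, A.mul_top] at h2

lemma imp_eq_top_of_le {a b : α} (h : a ≤ b) : A.imp a b = ⊤ :=
  le_antisymm le_top ((A.le_imp_iff a b ⊤).mpr (by rw [A.mul_top]; exact h))

lemma imp_self (a : α) : A.imp a a = ⊤ := imp_eq_top_of_le A le_rfl

lemma mul_le_mul_right {b d : α} (a : α) (h : b ≤ d) : A.mul a b ≤ A.mul a d :=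
  (A.le_imp_iff a (A.mul a d) b).mp (h.trans ((A.le_imp_iff a (A.mul a d) d).mpr le_rfl))

lemma mul_le_mul_left {a c : α} (h : a ≤ c) (b : α) : A.mul a b ≤ A.mul c b := by
  rw [A.mul_comm a b, A.mul_comm c b]; exact mul_le_mul_right A b h

lemma mul_mono {a b c d : α} (h1 : a ≤ c) (h2 : b ≤ d) : A.mul a b ≤ A.mul c d :=
  (mul_le_mul_left A h1 b).trans (mul_le_mul_right A c h2)

lemma mul_le_left (a b : α) : A.mul a b ≤ a := by
  have h := mul_le_mul_right A a (le_top : b ≤ ⊤); rwa [A.mul_top] at h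

lemma mul_le_right (a b : α) : A.mul a b ≤ b := by
  rw [A.mul_comm]; exact mul_le_left A b a

lemma top_mul (a : α) : A.mul ⊤ a = a := by rw [A.mul_comm, A.mul_top]

lemma mul_sup (c a b : α) : A.mul c (a ⊔ b) = A.mul c a ⊔ A.mul c b := by
  apply le_antisymm
  · exact (A.le_imp_iff _ _ _).mp (sup_le ((A.le_imp_iff _ _ _).mpr le_sup_left)
      ((A.le_imp_iff _ _ _).mpr le_sup_right))
  · exact sup_le (mul_le_mul_right A c le_sup_left) (mul_le_mul_right A c le_sup_right)

lemma mul_mul_mul (a b c d : α) :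
    A.mul (A.mul a b) (A.mul c d) = A.mul (A.mul a c) (A.mul b d) := by
  rw [A.mul_assoc a b (A.mul c d), ← A.mul_assoc b c d, A.mul_comm b c,
    A.mul_assoc c b d, ← A.mul_assoc a c (A.mul b d)]

lemma mul_le_sq (a b : α) : A.mul a b ≤ A.mul a a ⊔ A.mul b b := by
  have h : A.mul (A.mul a b) (A.imp a b) ≤ A.mul b b := by
    rw [A.mul_comm a b, A.mul_assoc, ← A.inf_eq_mul_imp]
    exact mul_le_mul_right A b inf_le_right
  have h' : A.mul (A.mul a b) (A.imp b a) ≤ A.mul a a := by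
    rw [A.mul_assoc, ← A.inf_eq_mul_imp]
    exact mul_le_mul_right A a inf_le_right
  calc A.mul a b = A.mul (A.mul a b) (A.imp a b ⊔ A.imp b a) := by
        rw [A.sup_imp_eq_top, A.mul_top]
    _ = A.mul (A.mul a b) (A.imp a b) ⊔ A.mul (A.mul a b) (A.imp b a) := mul_sup A _ _ _
    _ ≤ A.mul a a ⊔ A.mul b b := sup_le (h.trans le_sup_right) (h'.trans le_sup_left)

lemma sup_sq_le (a b : α) : A.mul (a ⊔ b) (a ⊔ b) ≤ A.mul a a ⊔ A.mul b b := by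
  rw [mul_sup, A.mul_comm (a ⊔ b) a, A.mul_comm (a ⊔ b) b, mul_sup, mul_sup]
  refine sup_le (sup_le le_sup_left ?_) (sup_le ?_ le_sup_right)
  · exact mul_le_sq A a b
  · rw [A.mul_comm b a]; exact mul_le_sq A a b

lemma pow_zero (x : α) : A.pow x 0 = ⊤ := rfl

lemma pow_succ (x : α) (n : ℕ) : A.pow x (n + 1) = A.mul (A.pow x n) x := rfl

lemma pow_one (x : α) : A.pow x 1 = x := by rw [pow_succ, pow_zero, top_mul]

lemma pow_add (x : α) (m n : ℕ) : A.pow x (m + n) = A.mul (A.pow x m) (A.pow x n) := by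
  induction n with
  | zero => rw [Nat.add_zero, pow_zero, A.mul_top]
  | succ n ih =>
    rw [← Nat.add_assoc, pow_succ, pow_succ, ih, A.mul_assoc]

lemma pow_le_self (x : α) (n : ℕ) : A.pow x (n + 1) ≤ x := by
  rw [pow_succ]; exact mul_le_right A _ x

lemma pow_le_pow {x : α} {m n : ℕ} (h : m ≤ n) : A.pow x n ≤ A.pow x m := by
  obtain ⟨k, rfl⟩ := Nat.exists_eq_add_of_le h
  rw [pow_add]; exact mul_le_left A _ _

lemma top_pow (n : ℕ) : A.pow (⊤ : α) n = ⊤ := by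
  induction n with
  | zero => rfl
  | succ n ih => rw [pow_succ, ih, A.mul_top]

lemma sup_pow (a b : α) (j : ℕ) :
    A.pow (a ⊔ b) (2 ^ j) ≤ A.pow a (2 ^ j) ⊔ A.pow b (2 ^ j) := by
  induction j with
  | zero => rw [Nat.pow_zero, pow_one, pow_one, pow_one]
  | succ j ih =>
    have h2 : (2 : ℕ) ^ (j + 1) = 2 ^ j + 2 ^ j := by
      rw [Nat.pow_succ, Nat.mul_two]
    rw [h2, pow_add, pow_add, pow_add]
    calc A.mul (A.pow (a ⊔ b) (2 ^ j)) (A.pow (a ⊔ b) (2 ^ j))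
        ≤ A.mul (A.pow a (2 ^ j) ⊔ A.pow b (2 ^ j)) (A.pow a (2 ^ j) ⊔ A.pow b (2 ^ j)) :=
          mul_mono A ih ih
      _ ≤ _ := sup_sq_le A _ _

lemma neg_antitone {a b : α} (h : a ≤ b) : A.neg b ≤ A.neg a := by
  rw [neg, neg, A.le_imp_iff]
  exact (mul_le_mul_left A h _).trans (imp_le A b ⊥)

/-- A subalgebra: a subset containing ⊥ and closed under ⊙ and →. -/
def Subalg (A : BLAlgebra α) (S : Set α) : Prop :=
  ⊥ ∈ S ∧ (∀ x ∈ S, ∀ y ∈ S, A.mul x y ∈ S) ∧ (∀ x ∈ S, ∀ y ∈ S, A.imp x y ∈ S)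

lemma Subalg.top_mem {S : Set α} (hS : Subalg A S) : (⊤ : α) ∈ S := by
  have h := hS.2.2 ⊥ hS.1 ⊥ hS.1
  rwa [imp_eq_top_of_le A le_rfl] at h

lemma Subalg.pow_mem {S : Set α} (hS : Subalg A S) {x : α} (hx : x ∈ S) (n : ℕ) :
    A.pow x n ∈ S := by
  induction n with
  | zero => exact hS.top_mem A
  | succ n ih => exact hS.2.1 _ ih _ hx

lemma Subalg.neg_mem {S : Set α} (hS : Subalg A S) {x : α} (hx : x ∈ S) : A.neg x ∈ S :=
  hS.2.2 x hx ⊥ hS.1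

lemma subalg_univ : Subalg A (Set.univ : Set α) :=
  ⟨trivial, fun _ _ _ _ => trivial, fun _ _ _ _ => trivial⟩

/-- The filter of `S` generated by a filter `M` together with an element `y`. -/
def genF (A : BLAlgebra α) (S M : Set α) (y : α) : Set α :=
  {z | z ∈ S ∧ ∃ m ∈ M, ∃ k : ℕ, A.mul m (A.pow y k) ≤ z}

lemma genF_filter {S M : Set α} (hS : Subalg A S) (hM : A.IsFilterOn S M) {y : α}
    (hy : y ∈ S) : A.IsFilterOn S (genF A S M y) := by
  refine ⟨fun z hz => hz.1, ?_, ?_, ?_⟩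
  · obtain ⟨m, hm⟩ := hM.2.1
    exact ⟨m, hM.1 hm, m, hm, 0, by rw [pow_zero, A.mul_top]⟩
  · rintro z₁ ⟨hz₁, m₁, hm₁, k₁, h₁⟩ z₂ ⟨hz₂, m₂, hm₂, k₂, h₂⟩
    refine ⟨hS.2.1 _ hz₁ _ hz₂, A.mul m₁ m₂, hM.2.2.1 _ hm₁ _ hm₂, k₁ + k₂, ?_⟩
    rw [pow_add, mul_mul_mul]
    exact mul_mono A h₁ h₂
  · rintro z ⟨hz, m, hm, k, h⟩ w hw hzw
    exact ⟨hw, m, hm, k, h.trans hzw⟩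

lemma genF_subset {S M : Set α} (hM : A.IsFilterOn S M) (y : α) : M ⊆ genF A S M y :=
  fun m hm => ⟨hM.1 hm, m, hm, 0, by rw [pow_zero, A.mul_top]⟩

lemma genF_self_mem {S M : Set α} (hM : A.IsFilterOn S M) {y : α} (hy : y ∈ S) :
    y ∈ genF A S M y := by
  obtain ⟨m, hm⟩ := hM.2.1
  exact ⟨hy, m, hm, 1, by rw [pow_one]; exact mul_le_right A m y⟩

lemma topF_filter {S : Set α} (hS : Subalg A S) :
    A.IsFilterOn S {z | z ∈ S ∧ (⊤ : α) ≤ z} := by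
  refine ⟨fun z hz => hz.1, ⟨⊤, hS.top_mem A, le_rfl⟩, ?_, ?_⟩
  · rintro z₁ ⟨hz₁, h₁⟩ z₂ ⟨hz₂, h₂⟩
    refine ⟨hS.2.1 _ hz₁ _ hz₂, ?_⟩
    calc (⊤ : α) = A.mul ⊤ ⊤ := (A.mul_top ⊤).symm
      _ ≤ A.mul z₁ z₂ := mul_mono A h₁ h₂
  · rintro z ⟨hz, h⟩ w hw hzw
    exact ⟨hw, h.trans hzw⟩

lemma proper_iff {S F : Set α} (hS : Subalg A S) (hF : A.IsFilterOn S F) :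
    F ≠ S ↔ ⊥ ∉ F := by
  constructor
  · intro hne hbot
    exact hne (Set.Subset.antisymm hF.1 (fun y hy => hF.2.2.2 ⊥ hbot y hy bot_le))
  · intro hbot hne
    exact hbot (hne ▸ hS.1)

lemma exists_maximal {S F : Set α} (hS : Subalg A S) (hF : A.IsFilterOn S F)
    (hb : ⊥ ∉ F) : ∃ M, F ⊆ M ∧ A.IsMaximalFilterOn S M := by
  have hchaincond : ∀ c ⊆ {G | A.IsFilterOn S G ∧ ⊥ ∉ G}, IsChain (· ⊆ ·) c →
      c.Nonempty → ∃ ub ∈ {G | A.IsFilterOn S G ∧ ⊥ ∉ G}, ∀ s ∈ c, s ⊆ ub := by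
    intro c hc hchain hne
    obtain ⟨G₀, hG₀⟩ := hne
    refine ⟨⋃₀ c, ⟨⟨?_, ?_, ?_, ?_⟩, ?_⟩, fun s hs => Set.subset_sUnion_of_mem hs⟩
    · exact Set.sUnion_subset fun G hG => (hc hG).1.1
    · obtain ⟨m, hm⟩ := (hc hG₀).1.2.1
      exact ⟨m, G₀, hG₀, hm⟩
    · rintro x ⟨G₁, hG₁, hx⟩ y ⟨G₂, hG₂, hy⟩
      rcases hchain.total hG₁ hG₂ with h | h
      · exact ⟨G₂, hG₂, (hc hG₂).1.2.2.1 x (h hx) y hy⟩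
      · exact ⟨G₁, hG₁, (hc hG₁).1.2.2.1 x hx y (h hy)⟩
    · rintro x ⟨G₁, hG₁, hx⟩ y hy hxy
      exact ⟨G₁, hG₁, (hc hG₁).1.2.2.2 x hx y hy hxy⟩
    · rintro ⟨G₁, hG₁, hbot⟩
      exact (hc hG₁).2 hbot
  obtain ⟨M, hFM, hMmax⟩ :=
    zorn_subset_nonempty {G | A.IsFilterOn S G ∧ ⊥ ∉ G} hchaincond F ⟨hF, hb⟩
  exact ⟨M, hFM, hMmax.1.1, (proper_iff A hS hMmax.1.1).mpr hMmax.1.2,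
    fun G hG hGne hMG => Set.Subset.antisymm hMG
      (hMmax.2 ⟨hG, (proper_iff A hS hG).mp hGne⟩ hMG)⟩

lemma pow_mem_filterOn {S F : Set α} (hS : Subalg A S) (hF : A.IsFilterOn S F) {x : α}
    (hx : x ∈ F) (n : ℕ) : A.pow x n ∈ F := by
  induction n with
  | zero => exact hF.2.2.2 x hx ⊤ (hS.top_mem A) le_top
  | succ n ih => exact hF.2.2.1 _ ih _ hx

/-- The easy direction: the characterization set is inside the radical. -/
lemma char_mem_radOn {S : Set α} (hS : Subalg A S) {x : α} (hx : x ∈ S)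
    (h : ∀ n, A.neg (A.pow x n) ≤ x) : x ∈ A.RadOn S := by
  refine ⟨hx, fun M hM => ?_⟩
  by_contra hxM
  obtain ⟨hMf, hMne, hMmax⟩ := hM
  have hGf : A.IsFilterOn S (genF A S M x) := genF_filter A hS hMf hx
  by_cases hGS : genF A S M x = S
  · have hbot : ⊥ ∈ genF A S M x := by rw [hGS]; exact hS.1
    obtain ⟨-, m, hm, k, hk⟩ := hbot
    have hmneg : m ≤ A.neg (A.pow x k) := by
      rw [neg, A.le_imp_iff, A.mul_comm]; exact hk
    have hnegM : A.neg (A.pow x k) ∈ M :=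
      hMf.2.2.2 m hm _ (hS.neg_mem A (hS.pow_mem A hx k)) hmneg
    exact hxM (hMf.2.2.2 _ hnegM x hx (h k))
  · have := hMmax _ hGf hGS (genF_subset A hMf x)
    exact hxM (this ▸ genF_self_mem A hMf hx)

/-- The hard direction: radical elements satisfy `(xⁿ)⁻ ≤ x`. -/
lemma radOn_char {S : Set α} (hS : Subalg A S) {x : α} (hx : x ∈ A.RadOn S) (n : ℕ) :
    A.neg (A.pow x n) ≤ x := by
  obtain ⟨hxS, hmax⟩ := hx
  set u := A.neg (A.pow x n) with hu
  have huS : u ∈ S := hS.neg_mem A (hS.pow_mem A hxS n)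
  set v := A.imp x u with hv
  have hvS : v ∈ S := hS.2.2 x hxS u huS
  have hT := topF_filter A hS
  set F := genF A S {z | z ∈ S ∧ (⊤ : α) ≤ z} v with hF
  have hFf : A.IsFilterOn S F := genF_filter A hS hT hvS
  by_cases hb : ⊥ ∈ F
  · -- arithmetic case: then vᵏ = ⊥ for some k, and prelinearity gives u ≤ x
    obtain ⟨-, m, ⟨hmS, hm⟩, k, hk⟩ := hb
    have hvk : A.pow v k ≤ ⊥ := by
      calc A.pow v k = A.mul ⊤ (A.pow v k) := (top_mul A _).symm
        _ ≤ A.mul m (A.pow v k) := mul_le_mul_left A hm _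
        _ ≤ ⊥ := hk
    have hsup : A.imp u x ⊔ v = ⊤ := by rw [hv, A.sup_imp_eq_top]
    have h1 : (⊤ : α) ≤ A.pow (A.imp u x) (2 ^ k) ⊔ A.pow v (2 ^ k) := by
      calc (⊤ : α) = A.pow (A.imp u x ⊔ v) (2 ^ k) := by rw [hsup, top_pow]
        _ ≤ _ := sup_pow A _ _ k
    have h2 : A.pow v (2 ^ k) ≤ ⊥ :=
      (pow_le_pow A (Nat.le_of_lt (Nat.lt_two_pow_self (n := k)))).trans hvk
    have h3 : (⊤ : α) ≤ A.pow (A.imp u x) (2 ^ k) := by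
      calc (⊤ : α) ≤ A.pow (A.imp u x) (2 ^ k) ⊔ A.pow v (2 ^ k) := h1
        _ ≤ A.pow (A.imp u x) (2 ^ k) ⊔ ⊥ := sup_le_sup_left h2 _
        _ = A.pow (A.imp u x) (2 ^ k) := sup_bot_eq _
    have h4 : (⊤ : α) ≤ A.imp u x := by
      have h5 : A.pow (A.imp u x) (2 ^ k) ≤ A.imp u x := by
        have := pow_le_pow A (x := A.imp u x) (Nat.one_le_two_pow (n := k))
        rwa [pow_one] at this
      exact h3.trans h5
    exact le_of_imp_eq_top A (le_antisymm le_top h4)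
  · -- otherwise extend to a maximal filter and derive a contradiction
    exfalso
    obtain ⟨M, hFM, hMmax⟩ := exists_maximal A hS hFf hb
    have hxM : x ∈ M := hmax M hMmax
    have hvM : v ∈ M := hFM (genF_self_mem A hT hvS)
    have huM : u ∈ M := by
      have hmulM : A.mul x v ∈ M := hMmax.1.2.2.1 x hxM v hvM
      have : A.mul x v ≤ u := by rw [hv, ← A.inf_eq_mul_imp]; exact inf_le_right
      exact hMmax.1.2.2.2 _ hmulM u huS this
    have hpowM : A.pow x n ∈ M := pow_mem_filterOn A hS hMmax.1 hxM n
    have hbotM : (⊥ : α) ∈ M := by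
      have hmul : A.mul (A.pow x n) u ∈ M := hMmax.1.2.2.1 _ hpowM _ huM
      have : A.mul (A.pow x n) u ≤ ⊥ := imp_le A _ ⊥
      rwa [le_bot_iff.mp this] at hmul
    exact (proper_iff A hS hMmax.1).mp hMmax.2.1 hbotM

lemma isFilterOn_univ_iff {F : Set α} : A.IsFilterOn Set.univ F ↔ A.IsFilter F := by
  constructor
  · rintro ⟨-, h1, h2, h3⟩
    exact ⟨h1, h2, fun x hx y hxy => h3 x hx y trivial hxy⟩
  · rintro ⟨h1, h2, h3⟩
    exact ⟨Set.subset_univ F, h1, h2, fun x hx y _ hxy => h3 x hx y hxy⟩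

lemma isMaximalFilterOn_univ_iff {F : Set α} :
    A.IsMaximalFilterOn Set.univ F ↔ A.IsMaximalFilter F := by
  constructor
  · rintro ⟨h1, h2, h3⟩
    exact ⟨(isFilterOn_univ_iff A).mp h1, h2,
      fun G hG => h3 G ((isFilterOn_univ_iff A).mpr hG)⟩
  · rintro ⟨h1, h2, h3⟩
    exact ⟨(isFilterOn_univ_iff A).mpr h1, h2,
      fun G hG => h3 G ((isFilterOn_univ_iff A).mp hG)⟩

lemma mem_rad_iff {x : α} : x ∈ A.Rad ↔ x ∈ A.RadOn Set.univ := by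
  constructor
  · intro h
    exact ⟨trivial, fun F hF => h F ((isMaximalFilterOn_univ_iff A).mp hF)⟩
  · intro h F hF
    exact h.2 F ((isMaximalFilterOn_univ_iff A).mpr hF)

lemma rad_char {x : α} (hx : x ∈ A.Rad) (n : ℕ) : A.neg (A.pow x n) ≤ x :=
  radOn_char A (subalg_univ A) ((mem_rad_iff A).mp hx) n

lemma char_rad {x : α} (h : ∀ n, A.neg (A.pow x n) ≤ x) : x ∈ A.Rad :=
  (mem_rad_iff A).mpr (char_mem_radOn A (subalg_univ A) trivial h)

lemma pow_mem_rad {x : α} (hx : x ∈ A.Rad) (n : ℕ) : A.pow x n ∈ A.Rad := by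
  intro F hF
  have hxF := hx F hF
  induction n with
  | zero => exact hF.1.2.2 x hxF ⊤ le_top
  | succ n ih => exact hF.1.2.1 _ ih _ hxF

section StateOp

variable {σ : α → α}

lemma sigma_top (h5 : ∀ x y : α, σ (A.imp (σ x) (σ y)) = A.imp (σ x) (σ y)) :
    σ ⊤ = ⊤ := by
  have h := h5 ⊥ ⊥
  rwa [imp_self] at h

lemma sigma_idem (hσ : A.IsStateOperator σ) (x : α) : σ (σ x) = σ x := by
  have h := hσ.2.2.2.1 x ⊤
  rwa [sigma_top A hσ.2.2.2.2, A.mul_top] at h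

lemma sigma_range_subalg (hσ : A.IsStateOperator σ) : Subalg A (Set.range σ) := by
  obtain ⟨h0, h2, h3, h4, h5⟩ := hσ
  refine ⟨⟨⊥, h0⟩, ?_, ?_⟩
  · rintro _ ⟨x, rfl⟩ _ ⟨y, rfl⟩
    exact ⟨A.mul (σ x) (σ y), h4 x y⟩
  · rintro _ ⟨x, rfl⟩ _ ⟨y, rfl⟩
    exact ⟨A.imp (σ x) (σ y), h5 x y⟩

lemma sigma_neg (h0 : σ ⊥ = ⊥)
    (h2 : ∀ x y : α, σ (A.imp x y) = A.imp (σ x) (σ (x ⊓ y))) (a : α) :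
    σ (A.neg a) = A.neg (σ a) := by
  have h := h2 a ⊥
  rw [inf_bot_eq, h0] at h
  exact h

lemma sigma_mono (hmul : ∀ a b : α, σ (A.mul a b) ≤ σ a) {a b : α} (h : a ≤ b) :
    σ a ≤ σ b := by
  have heq : A.mul b (A.imp b a) = a := by
    rw [← A.inf_eq_mul_imp]; exact inf_eq_right.mpr h
  calc σ a = σ (A.mul b (A.imp b a)) := by rw [heq]
    _ ≤ σ b := hmul b _

lemma state_mul_le (hσ : A.IsStateOperator σ) (a b : α) : σ (A.mul a b) ≤ σ a := by
  rw [hσ.2.2.1 a b]; exact mul_le_left A _ _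

lemma strong_mul_le (hσ : A.IsStrongStateOperator σ) (a b : α) :
    σ (A.mul a b) ≤ σ a := by
  rw [hσ.2.2.1 a b]; exact mul_le_left A _ _

lemma strong_pow (hσ : A.IsStrongStateOperator σ) {x : α} (hx : x ∈ A.Rad) (n : ℕ) :
    σ (A.pow x n) = A.pow (σ x) n := by
  induction n with
  | zero => rw [pow_zero, pow_zero]; exact sigma_top A hσ.2.2.2.2
  | succ n ih =>
    cases n with
    | zero => rw [pow_one, pow_one]
    | succ m =>
      have hnegle : A.neg x ⊔ A.pow x (m + 1) = A.pow x (m + 1) := by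
        apply sup_eq_right.mpr
        have h1 : A.neg x ≤ A.neg (A.pow x (m + 1)) :=
          neg_antitone A (pow_le_self A x m)
        have h2 : A.neg (A.pow x (m + 1)) ≤ A.pow x (m + 1) := by
          have h3 := rad_char A (pow_mem_rad A hx (m + 1)) 1
          rwa [pow_one] at h3
        exact h1.trans h2
      calc σ (A.pow x (m + 1 + 1))
          = σ (A.mul x (A.pow x (m + 1))) := by rw [pow_succ, A.mul_comm]
        _ = A.mul (σ x) (σ (A.neg x ⊔ A.pow x (m + 1))) := hσ.2.2.1 x _
        _ = A.mul (σ x) (σ (A.pow x (m + 1))) := by rw [hnegle]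
        _ = A.mul (σ x) (A.pow (σ x) (m + 1)) := by rw [ih]
        _ = A.pow (σ x) (m + 1 + 1) := by
            rw [pow_succ A (σ x) (m + 1), A.mul_comm]

end StateOp

end BLAux

end BLAux

/-- for a state-operator σ, Rad(σ(A)) ⊆ σ(Rad(A)); if σ is a strong
state-operator, then σ(Rad(A)) = Rad(σ(A)). -/
theorem rad_image_stateOperator {α : Type*} [Lattice α] [BoundedOrder α]
    (A : BLAlgebra α) (σ : α → α) (hσ : A.IsStateOperator σ) :
    A.RadOn (Set.range σ) ⊆ σ '' A.Rad ∧
    (A.IsStrongStateOperator σ → σ '' A.Rad = A.RadOn (Set.range σ)) := by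
  have hS : BLAux.Subalg A (Set.range σ) := BLAux.sigma_range_subalg A hσ
  have part1 : A.RadOn (Set.range σ) ⊆ σ '' A.Rad := by
    rintro y hy
    obtain ⟨z, hz⟩ := hy.1
    have hfix : σ y = y := by rw [← hz, BLAux.sigma_idem A hσ]
    exact ⟨y, BLAux.char_rad A (fun n => BLAux.radOn_char A hS hy n), hfix⟩
  refine ⟨part1, fun hst => ?_⟩
  apply Set.Subset.antisymm _ part1
  rintro _ ⟨x, hx, rfl⟩
  refine BLAux.char_mem_radOn A hS ⟨x, rfl⟩ (fun n => ?_)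
  calc A.neg (A.pow (σ x) n) = A.neg (σ (A.pow x n)) := by
        rw [BLAux.strong_pow A hst hx n]
    _ = σ (A.neg (A.pow x n)) := (BLAux.sigma_neg A hσ.1 hσ.2.1 _).symm
    _ ≤ σ x := BLAux.sigma_mono A (BLAux.state_mul_le A hσ) (BLAux.rad_char A hx n)
end
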